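/- arXiv:1810.10236 — 6 statements merged into one kernel-verified Lean document; each statement's English description precedes it below -/
import Mathlib

section
/- The map μ ↦ X_μ sending a probability measure on ℝ with finite second moment to the pseudo-inverse of its cumulative distribution function is an isometry from (P₂(ℝ), W₂) onto the convex cone C of non-decreasing functions in L²(0,1); in particular W₂²(μ,ν) = ∫₀¹ |X_μ(s) − X_ν(s)|² ds for all μ, ν ∈ P₂(ℝ). -/
open MeasureTheory Set
open scoped ENNReal

/-- The pseudo-inverse of the CDF of a probability measure `μ` on `ℝ`. -/
noncomputable def pseudoInv (μ : Measure ℝ) (s : ℝ) : ℝ :=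
  sInf {x : ℝ | (μ (Iic x)).toReal > s}

open Filter Topology


section basic
variable {μ : Measure ℝ} [IsProbabilityMeasure μ]

lemma pi_set_nonempty {s : ℝ} (hs : s < 1) : {x : ℝ | (μ (Iic x)).toReal > s}.Nonempty := by
  have h := tendsto_measure_Iic_atTop (μ := μ)
  rw [measure_univ] at h
  have h2 : Tendsto (fun x => (μ (Iic x)).toReal) atTop (𝓝 (1 : ℝ≥0∞).toReal) :=
    (ENNReal.tendsto_toReal ENNReal.one_ne_top).comp h
  simp only [ENNReal.toReal_one] at h2
  have := h2.eventually (eventually_gt_nhds hs)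
  rcases this.exists with ⟨x, hx⟩
  exact ⟨x, hx⟩

lemma pi_set_bddBelow {s : ℝ} (hs : 0 < s) : BddBelow {x : ℝ | (μ (Iic x)).toReal > s} := by
  have h : Tendsto (fun n : ℕ => μ (Iic (-(n:ℝ)))) atTop (𝓝 (μ (⋂ n : ℕ, Iic (-(n:ℝ))))) := by
    refine tendsto_measure_iInter_atTop (fun n => measurableSet_Iic.nullMeasurableSet)
      (fun m n hmn => Iic_subset_Iic.2 (by exact_mod_cast neg_le_neg (Nat.cast_le.2 hmn)))
      ⟨0, measure_ne_top _ _⟩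
  have hempty : (⋂ n : ℕ, Iic (-(n:ℝ))) = ∅ := by
    ext y
    simp only [mem_iInter, mem_Iic, mem_empty_iff_false, iff_false, not_forall, not_le]
    obtain ⟨n, hn⟩ := exists_nat_gt (-y)
    exact ⟨n, by linarith⟩
  rw [hempty, measure_empty] at h
  have h2 : Tendsto (fun n : ℕ => (μ (Iic (-(n:ℝ)))).toReal) atTop (𝓝 (0 : ℝ≥0∞).toReal) :=
    (ENNReal.tendsto_toReal ENNReal.zero_ne_top).comp h
  simp only [ENNReal.toReal_zero] at h2
  rcases (h2.eventually (eventually_lt_nhds hs)).exists with ⟨n0, hx0⟩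
  refine ⟨-(n0:ℝ), fun x hx => ?_⟩
  by_contra hc
  push_neg at hc
  have : (μ (Iic x)).toReal ≤ (μ (Iic (-(n0:ℝ)))).toReal :=
    ENNReal.toReal_mono (measure_ne_top _ _) (measure_mono (Iic_subset_Iic.2 hc.le))
  exact absurd (lt_of_le_of_lt this hx0) (not_lt.2 hx.le)

lemma pi_le {s x : ℝ} (hs : 0 < s) (h : s < (μ (Iic x)).toReal) : pseudoInv μ s ≤ x :=
  csInf_le (pi_set_bddBelow hs) h

lemma le_of_pi_le {s x : ℝ} (hs0 : 0 < s) (hs1 : s < 1) (h : pseudoInv μ s ≤ x) :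
    s ≤ (μ (Iic x)).toReal := by
  -- right continuity
  have key : ∀ n : ℕ, s ≤ (μ (Iic (x + 1/(n+1)))).toReal := by
    intro n
    have hlt : pseudoInv μ s < x + 1/(n+1) := lt_of_le_of_lt h (lt_add_of_pos_right x (by positivity))
    obtain ⟨y, hy, hyx⟩ := exists_lt_of_csInf_lt (pi_set_nonempty hs1) hlt
    exact le_trans hy.le (ENNReal.toReal_mono (measure_ne_top _ _)
      (measure_mono (Iic_subset_Iic.2 hyx.le)))
  have hint : Tendsto (fun n : ℕ => μ (Iic (x + 1/(n+1)))) atTop (𝓝 (μ (Iic x))) := by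
    have hIic : ⋂ n : ℕ, Iic (x + 1/(n+1)) = Iic x := by
      ext y
      simp only [mem_iInter, mem_Iic]
      constructor
      · intro hy
        by_contra hc
        push_neg at hc
        obtain ⟨n, hn⟩ := exists_nat_one_div_lt (sub_pos.2 hc)
        have := hy n
        nlinarith [hn]
      · intro hy n
        have : (0:ℝ) < 1/(n+1) := by positivity
        linarith
    rw [← hIic]
    refine tendsto_measure_iInter_atTop (fun n => (measurableSet_Iic).nullMeasurableSet)
      (fun m n hmn => Iic_subset_Iic.2 ?_) ⟨0, measure_ne_top _ _⟩
    have : (1:ℝ)/(n+1) ≤ 1/(m+1) := by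
      apply one_div_le_one_div_of_le (by positivity)
      exact_mod_cast by exact_mod_cast add_le_add_left (Nat.cast_le.2 hmn) 1
    linarith
  have h2 : Tendsto (fun n : ℕ => (μ (Iic (x + 1/(n+1)))).toReal) atTop (𝓝 (μ (Iic x)).toReal) :=
    (ENNReal.tendsto_toReal (measure_ne_top _ _)).comp hint
  exact ge_of_tendsto h2 (Eventually.of_forall key)

lemma pi_monotoneOn : MonotoneOn (pseudoInv μ) (Ioo (0:ℝ) 1) := by
  intro a ha b hb hab
  apply le_csInf (pi_set_nonempty hb.2)
  intro x hx
  exact csInf_le (pi_set_bddBelow ha.1) (lt_of_le_of_lt hab hx)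

end basic
section meas
open MeasureTheory Set Filter Topology
open scoped ENNReal
variable {μ : Measure ℝ} [IsProbabilityMeasure μ]

/-- squeeze: a set sandwiched between `Ioo 0 b` and `Ioo 0 1 ∩ Iic b` is a.e. `Ioo 0 b`. -/
lemma squeeze_ae {b : ℝ} {S : Set ℝ} (hb1 : b ≤ 1)
    (h1 : Ioo 0 1 ∩ Iio b ⊆ S) (h2 : S ⊆ Ioo 0 1 ∩ Iic b) :
    S =ᵐ[volume] Ioo 0 b := by
  rw [MeasureTheory.ae_eq_set]
  constructor
  · have : S \ Ioo 0 b ⊆ {b} := by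
      intro u ⟨hu1, hu2⟩
      have h3 := h2 hu1
      simp only [mem_Ioo, not_and, not_lt, mem_singleton_iff] at hu2 ⊢
      rcases lt_or_ge u b with h | h
      · exact absurd (hu2 h3.1.1) (not_le.2 h)
      · exact le_antisymm h3.2 h
    exact measure_mono_null this (measure_singleton b)
  · have : Ioo 0 b \ S = ∅ := by
      rw [diff_eq_empty]
      intro u hu
      exact h1 ⟨⟨hu.1, lt_of_lt_of_le hu.2 hb1⟩, hu.2⟩
    simp [this]

lemma A_subset_lower {x : ℝ} : Ioo 0 1 ∩ Iio ((μ (Iic x)).toReal) ⊆ Ioo 0 1 ∩ pseudoInv μ ⁻¹' (Iic x) :=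
  fun u ⟨hu, hub⟩ => ⟨hu, pi_le hu.1 hub⟩

lemma A_subset_upper {x : ℝ} : Ioo 0 1 ∩ pseudoInv μ ⁻¹' (Iic x) ⊆ Ioo 0 1 ∩ Iic ((μ (Iic x)).toReal) :=
  fun u ⟨hu, hub⟩ => ⟨hu, le_of_pi_le hu.1 hu.2 hub⟩

lemma toReal_Iic_le_one {x : ℝ} : (μ (Iic x)).toReal ≤ 1 := by
  rw [← ENNReal.toReal_one]
  exact ENNReal.toReal_mono ENNReal.one_ne_top (prob_le_one)

/-- The sublevel set of the pseudo-inverse is a.e. an interval. -/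
lemma A_ae (x : ℝ) :
    ((Ioo 0 1 ∩ pseudoInv μ ⁻¹' (Iic x) : Set ℝ)) =ᵐ[volume] Ioo 0 ((μ (Iic x)).toReal) :=
  squeeze_ae toReal_Iic_le_one A_subset_lower A_subset_upper

lemma B_subset_lower {x : ℝ} :
    Ioo 0 1 ∩ Iio ((μ (Iio x)).toReal) ⊆ Ioo 0 1 ∩ pseudoInv μ ⁻¹' (Iio x) := by
  rintro u ⟨hu, hub⟩
  refine ⟨hu, ?_⟩
  have hmeas : μ (Iio x) = ⨆ n : ℕ, μ (Iic (x - 1/(n+1))) := by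
    have hmono : Monotone (fun n : ℕ => Iic (x - 1/((n:ℝ)+1))) := by
      intro m n hmn
      apply Iic_subset_Iic.2
      have : (1:ℝ)/(n+1) ≤ 1/(m+1) := by
        apply one_div_le_one_div_of_le (by positivity)
        exact_mod_cast add_le_add_left (Nat.cast_le.2 hmn) 1
      linarith
    rw [← hmono.measure_iUnion]
    congr 1
    ext y
    simp only [mem_iUnion, mem_Iic, mem_Iio]
    constructor
    · intro hy
      obtain ⟨n, hn⟩ := exists_nat_one_div_lt (K := ℝ) (sub_pos.2 hy)
      exact ⟨n, by linarith⟩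
    · rintro ⟨n, hn⟩
      have : (0:ℝ) < 1/((n:ℝ)+1) := by positivity
      linarith
  have hub' : ENNReal.ofReal u < μ (Iio x) :=
    (ENNReal.ofReal_lt_iff_lt_toReal hu.1.le (measure_ne_top _ _)).2 hub
  rw [hmeas, lt_iSup_iff] at hub'
  obtain ⟨n, hn⟩ := hub'
  have hu2 : u < (μ (Iic (x - 1/(n+1)))).toReal := by
    rwa [← ENNReal.ofReal_lt_iff_lt_toReal hu.1.le (measure_ne_top _ _)]
  have : pseudoInv μ u ≤ x - 1/(n+1) := pi_le hu.1 hu2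
  simp only [mem_preimage, mem_Iio]
  have hpos : (0:ℝ) < 1/(n+1) := by positivity
  linarith

lemma B_subset_upper {x : ℝ} :
    Ioo 0 1 ∩ pseudoInv μ ⁻¹' (Iio x) ⊆ Ioo 0 1 ∩ Iic ((μ (Iio x)).toReal) := by
  rintro u ⟨hu, hub⟩
  simp only [mem_preimage, mem_Iio] at hub
  refine ⟨hu, ?_⟩
  have h1 : u ≤ (μ (Iic (pseudoInv μ u))).toReal := le_of_pi_le hu.1 hu.2 (le_refl _)
  calc u ≤ (μ (Iic (pseudoInv μ u))).toReal := h1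
    _ ≤ (μ (Iio x)).toReal := ENNReal.toReal_mono (measure_ne_top _ _)
        (measure_mono (fun y hy => lt_of_le_of_lt hy hub))

lemma toReal_Iio_le_one {x : ℝ} : (μ (Iio x)).toReal ≤ 1 := by
  rw [← ENNReal.toReal_one]
  exact ENNReal.toReal_mono ENNReal.one_ne_top (prob_le_one)

lemma B_ae (x : ℝ) :
    ((Ioo 0 1 ∩ pseudoInv μ ⁻¹' (Iio x) : Set ℝ)) =ᵐ[volume] Ioo 0 ((μ (Iio x)).toReal) :=
  squeeze_ae toReal_Iio_le_one B_subset_lower B_subset_upper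

lemma pi_aemeasurable : AEMeasurable (pseudoInv μ) (volume.restrict (Ioo (0:ℝ) 1)) :=
  aemeasurable_restrict_of_monotoneOn measurableSet_Ioo pi_monotoneOn

instance : IsProbabilityMeasure (volume.restrict (Ioo (0:ℝ) 1)) :=
  ⟨by simp [Real.volume_Ioo]⟩

lemma restrict_apply_Ioo {S : Set ℝ} (hS : MeasurableSet S) :
    (volume.restrict (Ioo (0:ℝ) 1)) S = volume (Ioo 0 1 ∩ S) := by
  rw [Measure.restrict_apply hS, inter_comm]

/-- The pushforward of Lebesgue on (0,1) under the pseudo-inverse is μ. -/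
lemma map_pi : Measure.map (pseudoInv μ) (volume.restrict (Ioo (0:ℝ) 1)) = μ := by
  have : IsProbabilityMeasure (Measure.map (pseudoInv μ) (volume.restrict (Ioo (0:ℝ) 1))) :=
    Measure.isProbabilityMeasure_map pi_aemeasurable
  refine MeasureTheory.Measure.ext_of_Iic _ _ (fun x => ?_)
  rw [Measure.map_apply_of_aemeasurable pi_aemeasurable measurableSet_Iic,
    Measure.restrict_apply₀' measurableSet_Ioo.nullMeasurableSet]
  rw [inter_comm, measure_congr (A_ae x), Real.volume_Ioo]
  simp only [sub_zero]
  rw [ENNReal.ofReal_toReal (measure_ne_top _ _)]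

end meas
section mem
open MeasureTheory Set Filter Topology
open scoped ENNReal
variable {μ : Measure ℝ} [IsProbabilityMeasure μ]

lemma memL2_iff {m : Measure ℝ} {f : ℝ → ℝ} (hf : AEStronglyMeasurable f m) :
    MemLp f 2 m ↔ ∫⁻ x, ENNReal.ofReal (f x ^ 2) ∂m < ⊤ := by
  rw [memLp_two_iff_integrable_sq hf, Integrable, and_iff_right
      ((hf.aemeasurable.pow_const 2).aestronglyMeasurable),
    hasFiniteIntegral_iff_ofReal (Eventually.of_forall (fun x => sq_nonneg (f x)))]

lemma pi_sq_lintegral :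
    ∫⁻ u, ENNReal.ofReal (pseudoInv μ u ^ 2) ∂(volume.restrict (Ioo (0:ℝ) 1)) =
      ∫⁻ x, ENNReal.ofReal (x ^ 2) ∂μ := by
  conv_rhs => rw [← map_pi (μ := μ)]
  rw [lintegral_map' (by fun_prop) pi_aemeasurable]

lemma pi_memℒp (h2 : ∫⁻ x, ENNReal.ofReal (x ^ 2) ∂μ < ⊤) :
    MemLp (pseudoInv μ) 2 (volume.restrict (Ioo (0:ℝ) 1)) := by
  rw [memL2_iff pi_aemeasurable.aestronglyMeasurable, pi_sq_lintegral]
  exact h2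

end mem
section surj
open MeasureTheory Set Filter Topology
open scoped ENNReal

variable {f : ℝ → ℝ}

lemma clamp_cont_countable (hf : MonotoneOn f (Ioo 0 1)) :
    Set.Countable {s | s ∈ Ioo (0:ℝ) 1 ∧ ¬ContinuousAt f s} := by
  have hmem : ∀ n : ℕ, ∀ s : ℝ,
      max (1/((n:ℝ)+3)) (min s (1 - 1/((n:ℝ)+3))) ∈ Ioo (0:ℝ) 1 := by
    intro n s
    have h1 : (0:ℝ) < 1/(n+3) := by positivity
    have h2 : (1:ℝ)/(n+3) ≤ 1/3 := by
      apply one_div_le_one_div_of_le (by norm_num)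
      have : (0:ℝ) ≤ n := Nat.cast_nonneg n
      linarith
    constructor
    · exact lt_max_of_lt_left h1
    · apply max_lt (by linarith)
      apply lt_of_le_of_lt (min_le_right _ _)
      linarith
  have hgmono : ∀ n : ℕ, Monotone (fun s => f (max (1/((n:ℝ)+3)) (min s (1 - 1/((n:ℝ)+3))))) := by
    intro n a b hab
    exact hf (hmem n a) (hmem n b)
      (max_le_max (le_refl _) (min_le_min hab (le_refl _)))
  refine Set.Countable.mono ?_
    (Set.countable_iUnion (fun n : ℕ => (hgmono n).countable_not_continuousAt))
  rintro s ⟨hs, hcont⟩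
  obtain ⟨n, hn⟩ := exists_nat_one_div_lt (lt_min hs.1 (by linarith [hs.2] : (0:ℝ) < 1 - s))
  have hn3 : (1:ℝ)/(n+3) < min s (1 - s) := by
    apply lt_of_le_of_lt _ hn
    apply one_div_le_one_div_of_le (by positivity)
    push_cast; linarith
  simp only [mem_iUnion, mem_setOf_eq]
  refine ⟨n, fun hcg => hcont ?_⟩
  have heq : (fun u => f (max (1/((n:ℝ)+3)) (min u (1 - 1/(n+3))))) =ᶠ[𝓝 s] f := by
    have hopen : Ioo (1/((n:ℝ)+3)) (1 - 1/(n+3)) ∈ 𝓝 s := by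
      apply Ioo_mem_nhds
      · exact lt_of_lt_of_le hn3 (min_le_left _ _)
      · have := lt_of_lt_of_le hn3 (min_le_right _ _); linarith
    filter_upwards [hopen] with t ht
    rw [min_eq_left ht.2.le, max_eq_right ht.1.le]
  exact hcg.congr heq

lemma surj (hf : MonotoneOn f (Ioo 0 1))
    (hf2 : MemLp f 2 (volume.restrict (Ioo (0 : ℝ) 1))) :
    ∃ μ : Measure ℝ, IsProbabilityMeasure μ ∧
      (∫⁻ x, ENNReal.ofReal (x ^ 2) ∂μ < ⊤) ∧
      pseudoInv μ =ᵐ[volume.restrict (Ioo (0 : ℝ) 1)] f := by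
  set P := volume.restrict (Ioo (0 : ℝ) 1) with hP
  have hfm : AEMeasurable f P := hf2.aestronglyMeasurable.aemeasurable
  set μ := Measure.map f P with hμ
  haveI hprob : IsProbabilityMeasure μ := Measure.isProbabilityMeasure_map hfm
  have hmap : ∀ x : ℝ, μ (Iic x) = volume (Ioo 0 1 ∩ f ⁻¹' (Iic x)) := by
    intro x
    rw [hμ, Measure.map_apply_of_aemeasurable hfm measurableSet_Iic, hP,
      Measure.restrict_apply₀' measurableSet_Ioo.nullMeasurableSet, inter_comm]
  refine ⟨μ, hprob, ?_, ?_⟩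
  · rw [hμ, lintegral_map' (by fun_prop) hfm]
    exact (memL2_iff hf2.aestronglyMeasurable).1 hf2
  -- a.e. equality
  have claim_a : ∀ s ∈ Ioo (0:ℝ) 1, ∀ t, s < t → t < 1 → pseudoInv μ s ≤ f t := by
    intro s hs t hst ht1
    apply pi_le hs.1
    have hsub : Ioo (0:ℝ) t ⊆ Ioo 0 1 ∩ f ⁻¹' (Iic (f t)) := by
      intro u hu
      have hu1 : u ∈ Ioo (0:ℝ) 1 := ⟨hu.1, hu.2.trans ht1⟩
      exact ⟨hu1, hf hu1 ⟨hs.1.trans hst, ht1⟩ hu.2.le⟩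
    have : ENNReal.ofReal t ≤ μ (Iic (f t)) := by
      rw [hmap]
      have h := measure_mono (μ := volume) hsub
      rwa [Real.volume_Ioo, sub_zero] at h
    calc s < t := hst
      _ = (ENNReal.ofReal t).toReal := (ENNReal.toReal_ofReal (by linarith [hs.1] : (0:ℝ) ≤ t)).symm
      _ ≤ (μ (Iic (f t))).toReal := ENNReal.toReal_mono (measure_ne_top _ _) this
  have claim_b : ∀ s ∈ Ioo (0:ℝ) 1, ∀ s', 0 < s' → s' < s → f s' ≤ pseudoInv μ s := by
    intro s hs s' hs'0 hs's
    apply le_csInf (pi_set_nonempty hs.2)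
    intro x hx
    by_contra hc
    push_neg at hc
    have hsub : Ioo 0 1 ∩ f ⁻¹' (Iic x) ⊆ Ioo (0:ℝ) s' := by
      rintro u ⟨hu, hux⟩
      refine ⟨hu.1, ?_⟩
      by_contra hcu
      push_neg at hcu
      have : f s' ≤ f u := hf ⟨hs'0, hs's.trans hs.2⟩ hu hcu
      exact absurd (le_trans this hux) (not_le.2 hc)
    have hle : μ (Iic x) ≤ ENNReal.ofReal s' := by
      rw [hmap]
      have h := measure_mono (μ := volume) hsub
      rwa [Real.volume_Ioo, sub_zero] at h
    have : (μ (Iic x)).toReal ≤ s' := by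
      have := ENNReal.toReal_mono ENNReal.ofReal_ne_top hle
      rwa [ENNReal.toReal_ofReal hs'0.le] at this
    simp only [mem_setOf_eq] at hx
    linarith
  have hnull : (volume : Measure ℝ) {s | s ∈ Ioo (0:ℝ) 1 ∧ ¬ContinuousAt f s} = 0 :=
    (clamp_cont_countable hf).measure_zero _
  have hPnull : P {s | s ∈ Ioo (0:ℝ) 1 ∧ ¬ContinuousAt f s} = 0 :=
    le_antisymm (le_trans (Measure.restrict_le_self _) hnull.le) zero_le
  have hbadae : ∀ᵐ s ∂P, s ∉ {s | s ∈ Ioo (0:ℝ) 1 ∧ ¬ContinuousAt f s} :=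
    (MeasureTheory.measure_eq_zero_iff_ae_notMem).1 hPnull
  filter_upwards [ae_restrict_mem measurableSet_Ioo, hbadae] with s hs hbad
  have hcont : ContinuousAt f s := by
    by_contra hc
    exact hbad ⟨hs, hc⟩
  apply le_antisymm
  · apply le_of_forall_pos_le_add
    intro ε hε
    obtain ⟨δ, hδ, hδ2⟩ := Metric.continuousAt_iff.1 hcont ε hε
    set t := min (s + δ/2) ((s+1)/2) with hts
    have hst : s < t := lt_min (by linarith) (by linarith [hs.2])
    have ht1 : t < 1 := lt_of_le_of_lt (min_le_right _ _) (by linarith [hs.2])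
    have hdist : dist t s < δ := by
      rw [Real.dist_eq, abs_lt]
      constructor
      · linarith
      · have : t ≤ s + δ/2 := min_le_left _ _
        linarith
    have h1 : f t < f s + ε := by
      have := hδ2 hdist
      rw [Real.dist_eq, abs_lt] at this
      linarith [this.2]
    exact le_trans (claim_a s hs t hst ht1) h1.le
  · apply le_of_forall_pos_le_add
    intro ε hε
    obtain ⟨δ, hδ, hδ2⟩ := Metric.continuousAt_iff.1 hcont ε hε
    set s' := max (s - δ/2) (s/2) with hs'
    have hs'0 : 0 < s' := lt_max_of_lt_right (by linarith [hs.1])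
    have hs's : s' < s := max_lt (by linarith) (by linarith [hs.1])
    have hdist : dist s' s < δ := by
      rw [Real.dist_eq, abs_lt]
      constructor
      · have : s - δ/2 ≤ s' := le_max_left _ _
        linarith
      · linarith
    have h1 : f s - ε < f s' := by
      have := hδ2 hdist
      rw [Real.dist_eq, abs_lt] at this
      linarith [this.1]
    have h2 := claim_b s hs s' hs'0 hs's
    linarith
end surj
section geom
open MeasureTheory Set Filter Topology
open scoped ENNReal

lemma diag_null : (volume : Measure (ℝ × ℝ)) {q : ℝ × ℝ | q.1 = q.2} = 0 := by
  have hmeas : MeasurableSet {q : ℝ × ℝ | q.1 = q.2} :=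
    (isClosed_eq continuous_fst continuous_snd).measurableSet
  rw [Measure.volume_eq_prod, Measure.prod_apply hmeas]
  have : ∀ x : ℝ, (Prod.mk x ⁻¹' {q : ℝ × ℝ | q.1 = q.2}) = {x} := by
    intro x; ext y; simp [eq_comm]
  simp [this]

lemma triangle_vol (x y : ℝ) :
    ENNReal.ofReal ((x - y) ^ 2) =
      2 * volume {q : ℝ × ℝ | min x y ≤ q.1 ∧ q.1 < q.2 ∧ q.2 ≤ max x y} := by
  set a := min x y
  set b := max x y
  set T : Set (ℝ × ℝ) := {q | a ≤ q.1 ∧ q.1 < q.2 ∧ q.2 ≤ b} with hT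
  set T' : Set (ℝ × ℝ) := {q | a ≤ q.2 ∧ q.2 < q.1 ∧ q.1 ≤ b} with hT'
  have hTmeas : MeasurableSet T := by
    apply MeasurableSet.inter
    · exact measurableSet_le measurable_const measurable_fst
    · exact (measurableSet_lt measurable_fst measurable_snd).inter
        (measurableSet_le measurable_snd measurable_const)
  have hT'meas : MeasurableSet T' := by
    apply MeasurableSet.inter
    · exact measurableSet_le measurable_const measurable_snd
    · exact (measurableSet_lt measurable_snd measurable_fst).inter
        (measurableSet_le measurable_fst measurable_const)
  have hswap : T' = Prod.swap ⁻¹' T := by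
    ext q; simp only [hT, hT', mem_setOf_eq, mem_preimage, Prod.fst_swap, Prod.snd_swap]
  have hvol_eq : volume T' = volume T := by
    rw [hswap]
    have hmp : MeasurePreserving (Prod.swap : ℝ × ℝ → ℝ × ℝ)
        (volume : Measure (ℝ × ℝ)) (volume : Measure (ℝ × ℝ)) := by
      rw [Measure.volume_eq_prod]
      exact Measure.measurePreserving_swap
    exact hmp.measure_preimage hTmeas.nullMeasurableSet
  have hsq : volume (Icc a b ×ˢ Icc a b) = ENNReal.ofReal ((x - y) ^ 2) := by
    rw [Measure.volume_eq_prod, Measure.prod_prod, Real.volume_Icc,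
      ← ENNReal.ofReal_mul (by linarith [min_le_max (a := x) (b := y)] : (0:ℝ) ≤ b - a)]
    congr 1
    have : b - a = |y - x| := max_sub_min_eq_abs x y
    rw [this, ← sq, sq_abs, ← neg_sub x y, neg_sq]
  have hsub1 : T ∪ T' ⊆ Icc a b ×ˢ Icc a b := by
    rintro ⟨s, t⟩ (⟨h1, h2, h3⟩ | ⟨h1, h2, h3⟩) <;>
      exact ⟨⟨by linarith, by linarith⟩, ⟨by linarith, by linarith⟩⟩
  have hsub2 : Icc a b ×ˢ Icc a b ⊆ (T ∪ T') ∪ {q : ℝ × ℝ | q.1 = q.2} := by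
    rintro ⟨s, t⟩ ⟨⟨h1, h2⟩, h3, h4⟩
    rcases lt_trichotomy s t with h | h | h
    · exact Or.inl (Or.inl ⟨h1, h, h4⟩)
    · exact Or.inr h
    · exact Or.inl (Or.inr ⟨h3, h, h2⟩)
  have hdisj : Disjoint T T' := by
    rw [Set.disjoint_left]
    rintro ⟨s, t⟩ ⟨_, h2, _⟩ ⟨_, h5, _⟩
    exact absurd (h2.trans h5) (lt_irrefl s)
  have key : volume (T ∪ T') = ENNReal.ofReal ((x - y) ^ 2) := by
    apply le_antisymm
    · rw [← hsq]; exact measure_mono hsub1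
    · rw [← hsq]
      calc volume (Icc a b ×ˢ Icc a b) ≤ volume ((T ∪ T') ∪ {q : ℝ × ℝ | q.1 = q.2}) :=
            measure_mono hsub2
        _ ≤ volume (T ∪ T') + volume {q : ℝ × ℝ | q.1 = q.2} := measure_union_le _ _
        _ = volume (T ∪ T') := by rw [diag_null, add_zero]
  rw [measure_union hdisj hT'meas, hvol_eq] at key
  rw [← key, two_mul]

end geom
section cost
open MeasureTheory Set Filter Topology
open scoped ENNReal

def costE : Set ((ℝ × ℝ) × (ℝ × ℝ)) :=
  {r | min r.1.1 r.1.2 ≤ r.2.1 ∧ r.2.1 < r.2.2 ∧ r.2.2 ≤ max r.1.1 r.1.2}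

lemma costE_meas : MeasurableSet costE := by
  apply MeasurableSet.inter
  · exact measurableSet_le ((measurable_fst.fst).min (measurable_fst.snd)) measurable_snd.fst
  · exact (measurableSet_lt measurable_snd.fst measurable_snd.snd).inter
      (measurableSet_le measurable_snd.snd ((measurable_fst.fst).max (measurable_fst.snd)))

lemma slice_meas (q : ℝ × ℝ) :
    MeasurableSet {p : ℝ × ℝ | min p.1 p.2 ≤ q.1 ∧ q.1 < q.2 ∧ q.2 ≤ max p.1 p.2} := by
  by_cases h : q.1 < q.2
  · have heq : {p : ℝ × ℝ | min p.1 p.2 ≤ q.1 ∧ q.1 < q.2 ∧ q.2 ≤ max p.1 p.2} =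
        {p : ℝ × ℝ | min p.1 p.2 ≤ q.1} ∩ {p : ℝ × ℝ | q.2 ≤ max p.1 p.2} := by
      ext p; simp only [mem_setOf_eq, mem_inter_iff]; tauto
    rw [heq]
    exact (measurableSet_le (measurable_fst.min measurable_snd) measurable_const).inter
      (measurableSet_le measurable_const (measurable_fst.max measurable_snd))
  · have heq : {p : ℝ × ℝ | min p.1 p.2 ≤ q.1 ∧ q.1 < q.2 ∧ q.2 ≤ max p.1 p.2} = ∅ := by
      ext p; simp only [mem_setOf_eq, mem_empty_iff_false, iff_false]; tauto
    rw [heq]; exact MeasurableSet.empty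

lemma tri_meas (p : ℝ × ℝ) :
    MeasurableSet {q : ℝ × ℝ | min p.1 p.2 ≤ q.1 ∧ q.1 < q.2 ∧ q.2 ≤ max p.1 p.2} :=
  (measurableSet_le measurable_const measurable_fst).inter
    ((measurableSet_lt measurable_fst measurable_snd).inter
      (measurableSet_le measurable_snd measurable_const))

lemma indicator_slice_fst (p : ℝ × ℝ) :
    (fun q => costE.indicator (1 : (ℝ × ℝ) × (ℝ × ℝ) → ℝ≥0∞) (p, q)) =
      ({q : ℝ × ℝ | min p.1 p.2 ≤ q.1 ∧ q.1 < q.2 ∧ q.2 ≤ max p.1 p.2}.indicator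
        (1 : (ℝ × ℝ) → ℝ≥0∞)) := by
  ext q
  by_cases h : (p, q) ∈ costE
  · rw [indicator_of_mem h, indicator_of_mem (show q ∈ {q : ℝ × ℝ |
      min p.1 p.2 ≤ q.1 ∧ q.1 < q.2 ∧ q.2 ≤ max p.1 p.2} from h)]
    rfl
  · rw [indicator_of_notMem h, indicator_of_notMem (show q ∉ {q : ℝ × ℝ |
      min p.1 p.2 ≤ q.1 ∧ q.1 < q.2 ∧ q.2 ≤ max p.1 p.2} from h)]

lemma indicator_slice_snd (q : ℝ × ℝ) :
    (fun p => costE.indicator (1 : (ℝ × ℝ) × (ℝ × ℝ) → ℝ≥0∞) (p, q)) =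
      ({p : ℝ × ℝ | min p.1 p.2 ≤ q.1 ∧ q.1 < q.2 ∧ q.2 ≤ max p.1 p.2}.indicator
        (1 : (ℝ × ℝ) → ℝ≥0∞)) := by
  ext p
  by_cases h : (p, q) ∈ costE
  · rw [indicator_of_mem h, indicator_of_mem (show p ∈ {p : ℝ × ℝ |
      min p.1 p.2 ≤ q.1 ∧ q.1 < q.2 ∧ q.2 ≤ max p.1 p.2} from h)]
    rfl
  · rw [indicator_of_notMem h, indicator_of_notMem (show p ∉ {p : ℝ × ℝ |
      min p.1 p.2 ≤ q.1 ∧ q.1 < q.2 ∧ q.2 ≤ max p.1 p.2} from h)]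

/-- Cost formula: quadratic cost as a double integral of sliced measures. -/
lemma cost_formula (γ : Measure (ℝ × ℝ)) [SFinite γ] :
    ∫⁻ p, ENNReal.ofReal ((p.1 - p.2) ^ 2) ∂γ =
      2 * ∫⁻ q, γ {p : ℝ × ℝ | min p.1 p.2 ≤ q.1 ∧ q.1 < q.2 ∧ q.2 ≤ max p.1 p.2}
        ∂(volume : Measure (ℝ × ℝ)) := by
  have step1 : ∀ p : ℝ × ℝ, ENNReal.ofReal ((p.1 - p.2) ^ 2) =
      2 * ∫⁻ q, costE.indicator 1 (p, q) ∂(volume : Measure (ℝ × ℝ)) := by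
    intro p
    rw [triangle_vol p.1 p.2]
    congr 1
    rw [show (fun q => costE.indicator (1 : (ℝ×ℝ)×(ℝ×ℝ) → ℝ≥0∞) (p, q)) =
      _ from indicator_slice_fst p]
    exact (lintegral_indicator_one (tri_meas p)).symm
  calc ∫⁻ p, ENNReal.ofReal ((p.1 - p.2) ^ 2) ∂γ
      = ∫⁻ p, 2 * ∫⁻ q, costE.indicator 1 (p, q) ∂(volume : Measure (ℝ × ℝ)) ∂γ :=
        lintegral_congr step1
    _ = 2 * ∫⁻ p, ∫⁻ q, costE.indicator 1 (p, q) ∂(volume : Measure (ℝ × ℝ)) ∂γ :=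
        lintegral_const_mul' _ _ (by norm_num)
    _ = 2 * ∫⁻ q, ∫⁻ p, costE.indicator 1 (p, q) ∂γ ∂(volume : Measure (ℝ × ℝ)) := by
        congr 1
        apply lintegral_lintegral_swap
        apply Measurable.aemeasurable
        have huncurry : Function.uncurry
            (fun (p q : ℝ × ℝ) => costE.indicator (1 : (ℝ×ℝ)×(ℝ×ℝ) → ℝ≥0∞) (p, q)) =
            costE.indicator 1 := by
          ext r
          rw [Function.uncurry]
        rw [huncurry]
        exact measurable_one.indicator costE_meas
    _ = 2 * ∫⁻ q, γ {p : ℝ × ℝ | min p.1 p.2 ≤ q.1 ∧ q.1 < q.2 ∧ q.2 ≤ max p.1 p.2}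
        ∂(volume : Measure (ℝ × ℝ)) := by
        congr 1
        refine lintegral_congr (fun q => ?_)
        rw [show (fun p => costE.indicator (1 : (ℝ×ℝ)×(ℝ×ℝ) → ℝ≥0∞) (p, q)) =
          _ from indicator_slice_snd q, lintegral_indicator_one (slice_meas q)]

end cost
section iso
open MeasureTheory Set Filter Topology
open scoped ENNReal

variable {μ ν : Measure ℝ} [IsProbabilityMeasure μ] [IsProbabilityMeasure ν]

lemma G_aemeas : AEMeasurable (fun u => (pseudoInv μ u, pseudoInv ν u))
    (volume.restrict (Ioo (0:ℝ) 1)) :=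
  (pi_aemeasurable).prodMk pi_aemeasurable

lemma couple0_fst :
    (Measure.map (fun u => (pseudoInv μ u, pseudoInv ν u))
      (volume.restrict (Ioo (0:ℝ) 1))).map Prod.fst = μ := by
  rw [AEMeasurable.map_map_of_aemeasurable measurable_fst.aemeasurable G_aemeas]
  show Measure.map (fun u => pseudoInv μ u) (volume.restrict (Ioo (0:ℝ) 1)) = μ
  exact map_pi

lemma couple0_snd :
    (Measure.map (fun u => (pseudoInv μ u, pseudoInv ν u))
      (volume.restrict (Ioo (0:ℝ) 1))).map Prod.snd = ν := by
  rw [AEMeasurable.map_map_of_aemeasurable measurable_snd.aemeasurable G_aemeas]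
  show Measure.map (fun u => pseudoInv ν u) (volume.restrict (Ioo (0:ℝ) 1)) = ν
  exact map_pi

lemma interval_diff_vol {a b : ℝ} (hb : 0 ≤ b) :
    volume (Ioo 0 a \ Ioo 0 b) = ENNReal.ofReal a - ENNReal.ofReal b := by
  rcases eq_or_lt_of_le hb with h | h
  · rw [← h]
    simp [Real.volume_Ioo]
  · have hset : Ioo 0 a \ Ioo 0 b = Ico b a := by
      ext u
      simp only [mem_diff, mem_Ioo, mem_Ico, not_and, not_lt]
      constructor
      · rintro ⟨⟨h0, ha⟩, himp⟩
        exact ⟨himp h0, ha⟩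
      · rintro ⟨hbu, hua⟩
        exact ⟨⟨lt_of_lt_of_le h hbu, hua⟩, fun _ => hbu⟩
    rw [hset, Real.volume_Ico, ENNReal.ofReal_sub _ hb]

lemma gamma0_rect (s t : ℝ) :
    (Measure.map (fun u => (pseudoInv μ u, pseudoInv ν u))
        (volume.restrict (Ioo (0:ℝ) 1))) (Iic s ×ˢ Ici t) = μ (Iic s) - ν (Iio t) := by
  rw [Measure.map_apply_of_aemeasurable G_aemeas (measurableSet_Iic.prod measurableSet_Ici),
    Measure.restrict_apply₀' measurableSet_Ioo.nullMeasurableSet]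
  have hset : (fun u => (pseudoInv μ u, pseudoInv ν u)) ⁻¹' (Iic s ×ˢ Ici t) ∩ Ioo 0 1 =
      (Ioo 0 1 ∩ pseudoInv μ ⁻¹' (Iic s)) \ (Ioo 0 1 ∩ pseudoInv ν ⁻¹' (Iio t)) := by
    ext u
    simp only [mem_inter_iff, mem_preimage, mem_prod, mem_Iic, mem_Ici, mem_Iio, mem_diff,
      not_and, not_lt]
    constructor
    · rintro ⟨⟨h1, h2⟩, h3⟩
      exact ⟨⟨h3, h1⟩, fun _ => h2⟩
    · rintro ⟨⟨h3, h1⟩, h2⟩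
      exact ⟨⟨h1, h2 h3⟩, h3⟩
  rw [hset, measure_congr ((A_ae s).diff (B_ae t)),
    interval_diff_vol ENNReal.toReal_nonneg,
    ENNReal.ofReal_toReal (measure_ne_top _ _), ENNReal.ofReal_toReal (measure_ne_top _ _)]

lemma gamma0_rect' (s t : ℝ) :
    (Measure.map (fun u => (pseudoInv μ u, pseudoInv ν u))
        (volume.restrict (Ioo (0:ℝ) 1))) (Ici t ×ˢ Iic s) = ν (Iic s) - μ (Iio t) := by
  rw [Measure.map_apply_of_aemeasurable G_aemeas (measurableSet_Ici.prod measurableSet_Iic),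
    Measure.restrict_apply₀' measurableSet_Ioo.nullMeasurableSet]
  have hset : (fun u => (pseudoInv μ u, pseudoInv ν u)) ⁻¹' (Ici t ×ˢ Iic s) ∩ Ioo 0 1 =
      (Ioo 0 1 ∩ pseudoInv ν ⁻¹' (Iic s)) \ (Ioo 0 1 ∩ pseudoInv μ ⁻¹' (Iio t)) := by
    ext u
    simp only [mem_inter_iff, mem_preimage, mem_prod, mem_Iic, mem_Ici, mem_Iio, mem_diff,
      not_and, not_lt]
    constructor
    · rintro ⟨⟨h1, h2⟩, h3⟩
      exact ⟨⟨h3, h2⟩, fun _ => h1⟩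
    · rintro ⟨⟨h3, h1⟩, h2⟩
      exact ⟨⟨h2 h3, h1⟩, h3⟩
  rw [hset, measure_congr ((A_ae s).diff (B_ae t)),
    interval_diff_vol ENNReal.toReal_nonneg,
    ENNReal.ofReal_toReal (measure_ne_top _ _), ENNReal.ofReal_toReal (measure_ne_top _ _)]

lemma coupling_rect_lower {γ : Measure (ℝ × ℝ)}
    (hfst : γ.map Prod.fst = μ) (hsnd : γ.map Prod.snd = ν) (s t : ℝ) :
    μ (Iic s) - ν (Iio t) ≤ γ (Iic s ×ˢ Ici t) := by
  rw [tsub_le_iff_right]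
  have h1 : μ (Iic s) = γ (Iic s ×ˢ (univ : Set ℝ)) := by
    rw [← hfst, Measure.map_apply measurable_fst measurableSet_Iic]
    congr 1
    ext p
    simp [mem_prod]
  have h2 : ν (Iio t) = γ ((univ : Set ℝ) ×ˢ Iio t) := by
    rw [← hsnd, Measure.map_apply measurable_snd measurableSet_Iio]
    congr 1
    ext p
    simp [mem_prod]
  have hsub : Iic s ×ˢ (univ : Set ℝ) ⊆ (Iic s ×ˢ Ici t) ∪ ((univ : Set ℝ) ×ˢ Iio t) := by
    rintro ⟨x, y⟩ ⟨hx, -⟩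
    rcases le_or_gt t y with h | h
    · exact Or.inl ⟨hx, h⟩
    · exact Or.inr ⟨trivial, h⟩
  calc μ (Iic s) = γ (Iic s ×ˢ (univ : Set ℝ)) := h1
    _ ≤ γ ((Iic s ×ˢ Ici t) ∪ ((univ : Set ℝ) ×ˢ Iio t)) := measure_mono hsub
    _ ≤ γ (Iic s ×ˢ Ici t) + γ ((univ : Set ℝ) ×ˢ Iio t) := measure_union_le _ _
    _ = γ (Iic s ×ˢ Ici t) + ν (Iio t) := by rw [← h2]

lemma coupling_rect_lower' {γ : Measure (ℝ × ℝ)}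
    (hfst : γ.map Prod.fst = μ) (hsnd : γ.map Prod.snd = ν) (s t : ℝ) :
    ν (Iic s) - μ (Iio t) ≤ γ (Ici t ×ˢ Iic s) := by
  rw [tsub_le_iff_right]
  have h1 : ν (Iic s) = γ ((univ : Set ℝ) ×ˢ Iic s) := by
    rw [← hsnd, Measure.map_apply measurable_snd measurableSet_Iic]
    congr 1
    ext p
    simp [mem_prod]
  have h2 : μ (Iio t) = γ (Iio t ×ˢ (univ : Set ℝ)) := by
    rw [← hfst, Measure.map_apply measurable_fst measurableSet_Iio]
    congr 1
    ext p
    simp [mem_prod]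
  have hsub : (univ : Set ℝ) ×ˢ Iic s ⊆ (Ici t ×ˢ Iic s) ∪ (Iio t ×ˢ (univ : Set ℝ)) := by
    rintro ⟨x, y⟩ ⟨-, hy⟩
    rcases le_or_gt t x with h | h
    · exact Or.inl ⟨h, hy⟩
    · exact Or.inr ⟨h, trivial⟩
  calc ν (Iic s) = γ ((univ : Set ℝ) ×ˢ Iic s) := h1
    _ ≤ γ ((Ici t ×ˢ Iic s) ∪ (Iio t ×ˢ (univ : Set ℝ))) := measure_mono hsub
    _ ≤ γ (Ici t ×ˢ Iic s) + γ (Iio t ×ˢ (univ : Set ℝ)) := measure_union_le _ _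
    _ = γ (Ici t ×ˢ Iic s) + μ (Iio t) := by rw [← h2]

lemma slice_eq {q : ℝ × ℝ} (h : q.1 < q.2) :
    {p : ℝ × ℝ | min p.1 p.2 ≤ q.1 ∧ q.1 < q.2 ∧ q.2 ≤ max p.1 p.2} =
      (Iic q.1 ×ˢ Ici q.2) ∪ (Ici q.2 ×ˢ Iic q.1) := by
  ext ⟨x, y⟩
  simp only [mem_setOf_eq, mem_union, mem_prod, mem_Iic, mem_Ici]
  constructor
  · rintro ⟨h1, -, h3⟩
    rcases min_le_iff.1 h1 with hx | hy
    · rcases le_max_iff.1 h3 with hx2 | hy2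
      · exact absurd (hx2.trans hx) (not_le.2 h)
      · exact Or.inl ⟨hx, hy2⟩
    · rcases le_max_iff.1 h3 with hx2 | hy2
      · exact Or.inr ⟨hx2, hy⟩
      · exact absurd (hy2.trans hy) (not_le.2 h)
  · rintro (⟨hx, hy⟩ | ⟨hx, hy⟩)
    · exact ⟨le_trans (min_le_left _ _) hx, h, le_trans hy (le_max_right _ _)⟩
    · exact ⟨le_trans (min_le_right _ _) hy, h, le_trans hx (le_max_left _ _)⟩

lemma slice_empty {q : ℝ × ℝ} (h : ¬ q.1 < q.2) :
    {p : ℝ × ℝ | min p.1 p.2 ≤ q.1 ∧ q.1 < q.2 ∧ q.2 ≤ max p.1 p.2} = ∅ := by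
  ext p
  simp only [mem_setOf_eq, mem_empty_iff_false, iff_false]
  rintro ⟨-, h2, -⟩
  exact h h2

lemma slice_compare {γ : Measure (ℝ × ℝ)}
    (hfst : γ.map Prod.fst = μ) (hsnd : γ.map Prod.snd = ν) (q : ℝ × ℝ) :
    (Measure.map (fun u => (pseudoInv μ u, pseudoInv ν u))
        (volume.restrict (Ioo (0:ℝ) 1)))
      {p : ℝ × ℝ | min p.1 p.2 ≤ q.1 ∧ q.1 < q.2 ∧ q.2 ≤ max p.1 p.2} ≤
    γ {p : ℝ × ℝ | min p.1 p.2 ≤ q.1 ∧ q.1 < q.2 ∧ q.2 ≤ max p.1 p.2} := by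
  by_cases h : q.1 < q.2
  · rw [slice_eq h]
    have hdisj : Disjoint (Iic q.1 ×ˢ Ici q.2) (Ici q.2 ×ˢ Iic q.1) := by
      rw [Set.disjoint_left]
      rintro ⟨x, y⟩ ⟨hx1, -⟩ ⟨hx2, -⟩
      exact absurd (lt_of_lt_of_le h (le_trans hx2 hx1)) (lt_irrefl _)
    rw [measure_union hdisj (measurableSet_Ici.prod measurableSet_Iic),
      measure_union hdisj (measurableSet_Ici.prod measurableSet_Iic)]
    apply add_le_add
    · rw [gamma0_rect]
      exact coupling_rect_lower hfst hsnd _ _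
    · rw [gamma0_rect']
      exact coupling_rect_lower' hfst hsnd _ _
  · rw [slice_empty h]
    simp

end iso

/-- The squared 2-Wasserstein distance between two probability measures on `ℝ`,
defined as the infimum of the quadratic transport cost over transport plans. -/
noncomputable def W2sq (μ ν : Measure ℝ) : ℝ≥0∞ :=
  ⨅ γ : {γ : Measure (ℝ × ℝ) // γ.map Prod.fst = μ ∧ γ.map Prod.snd = ν},
    ∫⁻ p, ENNReal.ofReal ((p.1 - p.2) ^ 2) ∂(γ : Measure (ℝ × ℝ))

/-- `μ ↦ X_μ` is an isometry from `(P₂(ℝ), W₂)` onto the convex cone of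
non-decreasing functions in `L²(0,1)`: it takes values in the cone, it is onto the cone,
and `W₂²(μ,ν) = ∫₀¹ |X_μ(s) − X_ν(s)|² ds`. -/
theorem pseudoInv_isometry_onto_cone :
    -- `X_μ` lies in the cone of non-decreasing `L²(0,1)` functions
    (∀ μ : Measure ℝ, IsProbabilityMeasure μ →
      (∫⁻ x, ENNReal.ofReal (x ^ 2) ∂μ < ⊤) →
      MonotoneOn (pseudoInv μ) (Ioo 0 1) ∧
        MemLp (pseudoInv μ) 2 (volume.restrict (Ioo (0 : ℝ) 1))) ∧
    -- surjectivity onto the cone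
    (∀ f : ℝ → ℝ, MonotoneOn f (Ioo 0 1) →
      MemLp f 2 (volume.restrict (Ioo (0 : ℝ) 1)) →
      ∃ μ : Measure ℝ, IsProbabilityMeasure μ ∧
        (∫⁻ x, ENNReal.ofReal (x ^ 2) ∂μ < ⊤) ∧
        pseudoInv μ =ᵐ[volume.restrict (Ioo (0 : ℝ) 1)] f) ∧
    -- isometry: the Wasserstein distance is the `L²(0,1)` distance of pseudo-inverses
    (∀ μ ν : Measure ℝ, IsProbabilityMeasure μ → IsProbabilityMeasure ν →
      (∫⁻ x, ENNReal.ofReal (x ^ 2) ∂μ < ⊤) →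
      (∫⁻ x, ENNReal.ofReal (x ^ 2) ∂ν < ⊤) →
      W2sq μ ν =
        ENNReal.ofReal (∫ s in Ioo (0 : ℝ) 1, |pseudoInv μ s - pseudoInv ν s| ^ 2)) := by
  refine ⟨?_, ?_, ?_⟩
  · intro μ hμ h2
    haveI := hμ
    exact ⟨pi_monotoneOn, pi_memℒp h2⟩
  · intro f hf hf2
    exact surj hf hf2
  · intro μ ν hμ hν h2μ h2ν
    haveI := hμ; haveI := hν
    set γ₀ := Measure.map (fun u => (pseudoInv μ u, pseudoInv ν u))
      (volume.restrict (Ioo (0:ℝ) 1)) with hγ₀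
    haveI : IsProbabilityMeasure γ₀ := Measure.isProbabilityMeasure_map G_aemeas
    have hcost0 : ∫⁻ p, ENNReal.ofReal ((p.1 - p.2) ^ 2) ∂γ₀ =
        ENNReal.ofReal (∫ s in Ioo (0 : ℝ) 1, |pseudoInv μ s - pseudoInv ν s| ^ 2) := by
      rw [hγ₀, lintegral_map' (by fun_prop) G_aemeas]
      have hint : Integrable (fun u => (pseudoInv μ u - pseudoInv ν u) ^ 2)
          (volume.restrict (Ioo (0:ℝ) 1)) :=
        ((pi_memℒp h2μ).sub (pi_memℒp h2ν)).integrable_sq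
      rw [← ofReal_integral_eq_lintegral_ofReal hint (ae_of_all _ fun u => sq_nonneg _)]
      congr 1
      refine integral_congr_ae (ae_of_all _ fun u => ?_)
      simp [sq_abs]
    apply le_antisymm
    · exact iInf_le_of_le ⟨γ₀, couple0_fst, couple0_snd⟩ (le_of_eq hcost0)
    · apply le_iInf
      rintro ⟨γ, hfst, hsnd⟩
      haveI : IsProbabilityMeasure γ := by
        constructor
        have h := congrArg (fun m : Measure ℝ => m univ) hfst
        simp only [Measure.map_apply measurable_fst MeasurableSet.univ, preimage_univ] at h
        rw [h]
        exact measure_univ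
      rw [← hcost0, cost_formula γ₀, cost_formula γ]
      exact mul_le_mul_right (lintegral_mono fun q => slice_compare hfst hsnd q) 2
end

section
/- Let ρ, η be probability densities on ℝ with finite second moments. Then F(ρ,η) = −(1/2)∫ (ρ−η) N⋆(ρ−η) dx ≥ 0, with equality if and only if ρ = η almost everywhere. -/
open MeasureTheory Set


noncomputable def stepE (t x : ℝ) : ℝ := if x ≤ t then 1 else 0

lemma sq_diff_indicator {x y : ℝ} (hxy : x ≤ y) :
    (fun t => (stepE t x - stepE t y) ^ 2) = (Ico x y).indicator (fun _ => (1 : ℝ)) := by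
  funext t
  by_cases h1 : x ≤ t <;> by_cases h2 : y ≤ t
  · simp [stepE, Set.indicator, h1, h2, mem_Ico, not_lt.2 h2]
  · simp [stepE, Set.indicator, h1, h2, mem_Ico, lt_of_not_ge h2]
  · exact absurd (hxy.trans h2) h1
  · simp [stepE, Set.indicator, h1, h2, mem_Ico]

lemma kernel_int_and_eq (x y : ℝ) :
    Integrable (fun t => (stepE t x - stepE t y) ^ 2) ∧
      ∫ t, (stepE t x - stepE t y) ^ 2 = |x - y| := by
  wlog hxy : x ≤ y generalizing x y
  · have h := this y x (le_of_not_ge hxy)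
    have hsw : (fun t => (stepE t x - stepE t y) ^ 2)
        = fun t => (stepE t y - stepE t x) ^ 2 := by funext t; ring
    rw [hsw, abs_sub_comm]; exact h
  · rw [sq_diff_indicator hxy]
    constructor
    · exact (integrable_indicator_iff measurableSet_Ico).2
        (integrableOn_const measure_Ico_lt_top.ne)
    · rw [integral_indicator measurableSet_Ico, setIntegral_const, smul_eq_mul, mul_one,
        Real.volume_real_Ico, max_eq_left (sub_nonneg.2 hxy), abs_sub_comm,
        abs_of_nonneg (sub_nonneg.2 hxy)]

lemma energy_repr (u : ℝ → ℝ) (hu : Integrable u) (hu0 : ∫ x, u x = 0)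
    (hxu : Integrable (fun x => |x| * |u x|)) :
    (∫ x, u x * ∫ y, |x - y| * u y)
        = -2 * ∫ t, (∫ x in Iic t, u x) ^ 2
      ∧ Integrable (fun t => (∫ x in Iic t, u x) ^ 2) := by
  set A : ℝ → ℝ := fun t => ∫ x in Iic t, u x with hA
  -- the step functions multiplied by u
  have hvind : ∀ t, (fun x => stepE t x * u x) = (Iic t).indicator u := by
    intro t; funext x; by_cases h : x ≤ t <;> simp [stepE, Set.indicator, h, mem_Iic]
  have hvI : ∀ t, Integrable (fun x => stepE t x * u x) := by
    intro t; rw [hvind t]; exact hu.indicator measurableSet_Iic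
  have hvint : ∀ t, ∫ x, stepE t x * u x = A t := by
    intro t; rw [hvind t, integral_indicator measurableSet_Iic]
  -- measurability of step function pieces
  have mE1 : Measurable (fun q : (ℝ × ℝ) × ℝ => stepE q.2 q.1.1) :=
    Measurable.ite (measurableSet_le (measurable_fst.fst) measurable_snd)
      measurable_const measurable_const
  have mE2 : Measurable (fun q : (ℝ × ℝ) × ℝ => stepE q.2 q.1.2) :=
    Measurable.ite (measurableSet_le (measurable_fst.snd) measurable_snd)
      measurable_const measurable_const
  set G : (ℝ × ℝ) → ℝ → ℝ :=
    fun p t => u p.1 * u p.2 * (stepE t p.1 - stepE t p.2) ^ 2 with hG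
  have hGaesm : AEStronglyMeasurable (Function.uncurry G)
      ((volume.prod volume).prod volume) := by
    refine AEStronglyMeasurable.mul ?_ ?_
    · exact hu.aestronglyMeasurable.comp_fst.comp_fst.mul hu.aestronglyMeasurable.comp_snd.comp_fst
    · exact ((mE1.sub mE2).pow_const 2).aestronglyMeasurable
  have hsec : ∀ p : ℝ × ℝ, Integrable (fun t => G p t) := fun p =>
    (kernel_int_and_eq p.1 p.2).1.const_mul (u p.1 * u p.2)
  -- majorant
  have hmaj : Integrable
      (fun p : ℝ × ℝ => |p.1| * |u p.1| * |u p.2| + |u p.1| * (|p.2| * |u p.2|))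
      (volume.prod volume) := (hxu.mul_prod hu.abs).add (hu.abs.mul_prod hxu)
  have habs_bound : ∀ p : ℝ × ℝ,
      |u p.1| * |u p.2| * |p.1 - p.2|
        ≤ |p.1| * |u p.1| * |u p.2| + |u p.1| * (|p.2| * |u p.2|) := by
    intro p
    have e2 : |p.1 - p.2| ≤ |p.1| + |p.2| := abs_sub _ _
    calc |u p.1| * |u p.2| * |p.1 - p.2|
        ≤ |u p.1| * |u p.2| * (|p.1| + |p.2|) :=
          mul_le_mul_of_nonneg_left e2 (mul_nonneg (abs_nonneg _) (abs_nonneg _))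
      _ = |p.1| * |u p.1| * |u p.2| + |u p.1| * (|p.2| * |u p.2|) := by ring
  have hnormint : Integrable (fun p : ℝ × ℝ => |u p.1| * |u p.2| * |p.1 - p.2|)
      (volume.prod volume) := by
    refine hmaj.mono' ?_ (ae_of_all _ fun p => ?_)
    · exact (hu.abs.aestronglyMeasurable.comp_fst.mul hu.abs.aestronglyMeasurable.comp_snd).mul
        ((continuous_fst.sub continuous_snd).abs.aestronglyMeasurable)
    · rw [Real.norm_eq_abs,
        abs_of_nonneg (mul_nonneg (mul_nonneg (abs_nonneg _) (abs_nonneg _)) (abs_nonneg _))]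
      exact habs_bound p
  have hnormeq : (fun p : ℝ × ℝ => ∫ t, ‖G p t‖)
      = fun p => |u p.1| * |u p.2| * |p.1 - p.2| := by
    funext p
    have h1 : (fun t => ‖G p t‖)
        = fun t => (|u p.1| * |u p.2|) * (stepE t p.1 - stepE t p.2) ^ 2 := by
      funext t
      simp only [hG]
      rw [Real.norm_eq_abs, abs_mul, abs_mul,
        abs_of_nonneg (sq_nonneg (stepE t p.1 - stepE t p.2))]
    rw [h1, integral_const_mul, (kernel_int_and_eq p.1 p.2).2]
  have hGint : Integrable (Function.uncurry G) ((volume.prod volume).prod volume) := by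
    refine (integrable_prod_iff hGaesm).2 ⟨ae_of_all _ hsec, ?_⟩
    show Integrable (fun p : ℝ × ℝ => ∫ t, ‖G p t‖) (volume.prod volume)
    rw [hnormeq]; exact hnormint
  -- integrability of the double-integral function
  have hF2 : Integrable (fun p : ℝ × ℝ => u p.1 * (|p.1 - p.2| * u p.2))
      (volume.prod volume) := by
    refine hmaj.mono' ?_ (ae_of_all _ fun p => ?_)
    · exact hu.aestronglyMeasurable.comp_fst.mul
        (((continuous_fst.sub continuous_snd).abs.aestronglyMeasurable).mul
          hu.aestronglyMeasurable.comp_snd)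
    · rw [Real.norm_eq_abs, abs_mul, abs_mul, abs_abs]
      calc |u p.1| * (|p.1 - p.2| * |u p.2|)
          = |u p.1| * |u p.2| * |p.1 - p.2| := by ring
        _ ≤ _ := habs_bound p
  -- step 1 : iterated integral as product integral
  have step1 : (∫ x, u x * ∫ y, |x - y| * u y)
      = ∫ p : ℝ × ℝ, u p.1 * (|p.1 - p.2| * u p.2) ∂(volume.prod volume) := by
    have hF2' : Integrable (Function.uncurry fun x y => u x * (|x - y| * u y))
        (volume.prod volume) := hF2
    have h := integral_integral (f := fun x y => u x * (|x - y| * u y)) hF2'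
    simp_rw [integral_const_mul] at h
    exact h
  -- step 2 : kernel representation
  have step2 : (∫ p : ℝ × ℝ, u p.1 * (|p.1 - p.2| * u p.2) ∂(volume.prod volume))
      = ∫ p : ℝ × ℝ, (∫ t, G p t) ∂(volume.prod volume) := by
    refine integral_congr_ae (ae_of_all _ fun p => ?_)
    simp only [hG]
    rw [integral_const_mul, (kernel_int_and_eq p.1 p.2).2]
    ring
  -- step 3 : Fubini swap
  have step3 : (∫ p : ℝ × ℝ, (∫ t, G p t) ∂(volume.prod volume))
      = ∫ t, ∫ p : ℝ × ℝ, G p t ∂(volume.prod volume) :=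
    integral_integral_swap hGint
  -- step 4 : inner integral computation
  have step4 : ∀ t, (∫ p : ℝ × ℝ, G p t ∂(volume.prod volume)) = -2 * (A t) ^ 2 := by
    intro t
    have hG4 : (fun p : ℝ × ℝ => G p t)
        = fun p => (stepE t p.1 * u p.1) * u p.2 + u p.1 * (stepE t p.2 * u p.2)
            - 2 * ((stepE t p.1 * u p.1) * (stepE t p.2 * u p.2)) := by
      funext p
      simp only [hG]
      by_cases h1 : p.1 ≤ t <;> by_cases h2 : p.2 ≤ t <;> (simp [stepE, h1, h2]; try ring)
    have hi1 : Integrable (fun p : ℝ × ℝ => stepE t p.1 * u p.1 * u p.2)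
        (volume.prod volume) := (hvI t).mul_prod hu
    have hi2 : Integrable (fun p : ℝ × ℝ => u p.1 * (stepE t p.2 * u p.2))
        (volume.prod volume) := hu.mul_prod (hvI t)
    have hi12 : Integrable (fun p : ℝ × ℝ =>
        stepE t p.1 * u p.1 * u p.2 + u p.1 * (stepE t p.2 * u p.2))
        (volume.prod volume) := hi1.add hi2
    have hi3 : Integrable
        (fun p : ℝ × ℝ => 2 * (stepE t p.1 * u p.1 * (stepE t p.2 * u p.2)))
        (volume.prod volume) := ((hvI t).mul_prod (hvI t)).const_mul 2
    have e1 : ∫ (a : ℝ × ℝ), stepE t a.1 * u a.1 * u a.2 ∂(volume.prod volume)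
        = (∫ x, stepE t x * u x) * ∫ x, u x :=
      integral_prod_mul (fun x => stepE t x * u x) u
    have e2 : ∫ (a : ℝ × ℝ), u a.1 * (stepE t a.2 * u a.2) ∂(volume.prod volume)
        = (∫ x, u x) * ∫ x, stepE t x * u x :=
      integral_prod_mul u (fun x => stepE t x * u x)
    have e3 : ∫ (a : ℝ × ℝ), stepE t a.1 * u a.1 * (stepE t a.2 * u a.2)
          ∂(volume.prod volume)
        = (∫ x, stepE t x * u x) * ∫ x, stepE t x * u x :=
      integral_prod_mul (fun x => stepE t x * u x) (fun x => stepE t x * u x)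
    rw [hG4, integral_sub hi12 hi3, integral_add hi1 hi2, integral_const_mul,
      e1, e2, e3, hvint, hu0]
    ring
  -- step 5 : marginal integrability
  have hswap : Integrable (Function.uncurry G ∘ Prod.swap)
      (volume.prod (volume.prod volume)) := hGint.swap
  have hmarg : Integrable (fun t => ∫ p : ℝ × ℝ, G p t ∂(volume.prod volume)) :=
    hswap.integral_prod_left
  have hA2int : Integrable (fun t => (A t) ^ 2) := by
    have h0 : (fun t => ∫ p : ℝ × ℝ, G p t ∂(volume.prod volume))
        = fun t => -2 * (A t) ^ 2 := funext step4
    rw [h0] at hmarg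
    have h1 : (fun t => (A t) ^ 2) = fun t => (-(1/2 : ℝ)) * (-2 * (A t) ^ 2) := by
      funext t; ring
    rw [h1]; exact hmarg.const_mul _
  refine ⟨?_, hA2int⟩
  rw [step1, step2, step3]
  have h0 : (fun t => ∫ p : ℝ × ℝ, G p t ∂(volume.prod volume))
      = fun t => -2 * (A t) ^ 2 := funext step4
  rw [h0, integral_const_mul]

/-- for probability densities `ρ, η` with finite second moments,
`F(ρ,η) = −(1/2)∫ (ρ−η) N⋆(ρ−η) ≥ 0`, with equality iff `ρ = η` a.e. -/
theorem energy_nonneg_eq_iff (ρ η : ℝ → ℝ)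
    (hρpos : ∀ x, 0 ≤ ρ x) (hηpos : ∀ x, 0 ≤ η x)
    (hρ : Integrable ρ) (hη : Integrable η)
    (hρmass : ∫ x, ρ x = 1) (hηmass : ∫ x, η x = 1)
    (hmom : Integrable fun x => x ^ 2 * (ρ x + η x)) :
    (0 ≤ -(1 / 2) * ∫ x, (ρ x - η x) * ∫ y, |x - y| * (ρ y - η y)) ∧
      ((-(1 / 2) * ∫ x, (ρ x - η x) * ∫ y, |x - y| * (ρ y - η y)) = 0 ↔
        ρ =ᵐ[volume] η) := by
  set u : ℝ → ℝ := fun x => ρ x - η x with hudef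
  have hu : Integrable u := hρ.sub hη
  have hu0 : ∫ x, u x = 0 := by
    simp only [hudef]; rw [integral_sub hρ hη, hρmass, hηmass]; ring
  have habs_le : ∀ x, |u x| ≤ ρ x + η x := by
    intro x
    simp only [hudef]
    exact (abs_sub _ _).trans
      (by rw [abs_of_nonneg (hρpos x), abs_of_nonneg (hηpos x)])
  have hxu : Integrable (fun x => |x| * |u x|) := by
    refine ((hρ.add hη).add hmom).mono' ?_ (ae_of_all _ fun x => ?_)
    · exact continuous_abs.aestronglyMeasurable.mul hu.abs.aestronglyMeasurable
    · rw [Real.norm_eq_abs, abs_of_nonneg (mul_nonneg (abs_nonneg _) (abs_nonneg _))]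
      have h1 : |x| ≤ 1 + x ^ 2 := by nlinarith [sq_nonneg (|x| - 1), sq_abs x]
      calc |x| * |u x| ≤ (1 + x ^ 2) * (ρ x + η x) :=
            mul_le_mul h1 (habs_le x) (abs_nonneg _) (by positivity)
        _ = (ρ x + η x) + x ^ 2 * (ρ x + η x) := by ring
  obtain ⟨hrep, hA2int⟩ := energy_repr u hu hu0 hxu
  set A : ℝ → ℝ := fun t => ∫ x in Iic t, u x with hAdef
  have hval : -(1 / 2 : ℝ) * (∫ x, (ρ x - η x) * ∫ y, |x - y| * (ρ y - η y))
      = ∫ t, A t ^ 2 := by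
    have h : (∫ x, (ρ x - η x) * ∫ y, |x - y| * (ρ y - η y))
        = ∫ x, u x * ∫ y, |x - y| * u y := rfl
    rw [h, hrep]; ring
  refine ⟨by rw [hval]; exact integral_nonneg fun t => sq_nonneg _, ?_, ?_⟩
  · intro h0
    rw [hval] at h0
    have hae : (fun t => A t ^ 2) =ᵐ[volume] 0 :=
      (integral_eq_zero_iff_of_nonneg (fun t => sq_nonneg _) hA2int).1 h0
    have hAcont : Continuous A := by
      have h1 : A = fun t => (∫ x in Iic (0 : ℝ), u x) + ∫ x in (0 : ℝ)..t, u x := by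
        funext t
        have h2 := intervalIntegral.integral_Iic_sub_Iic
          (hu.integrableOn (s := Iic 0)) (hu.integrableOn (s := Iic t))
        simp only [hAdef]
        linarith
      rw [h1]
      exact continuous_const.add (hu.continuous_primitive 0)
    have hzero : ∀ t, A t = 0 := by
      have h2 : (fun t => A t ^ 2) = fun _ => (0 : ℝ) :=
        (Continuous.ae_eq_iff_eq volume (hAcont.pow 2) continuous_const).1 hae
      intro t
      exact sq_eq_zero_iff.1 (congrFun h2 t)
    have hIic : ∀ t, ∫ x in Iic t, ρ x = ∫ x in Iic t, η x := by
      intro t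
      have h3 := hzero t
      have h4 : ∫ x in Iic t, (ρ x - η x)
          = (∫ x in Iic t, ρ x) - ∫ x in Iic t, η x :=
        integral_sub hρ.integrableOn hη.integrableOn
      simp only [hAdef, hudef] at h3
      rw [h4] at h3
      linarith
    set μρ := volume.withDensity (fun x => ENNReal.ofReal (ρ x)) with hμρ
    set μη := volume.withDensity (fun x => ENNReal.ofReal (η x)) with hμη
    haveI : IsFiniteMeasure μρ := by
      constructor
      rw [hμρ, withDensity_apply _ MeasurableSet.univ, Measure.restrict_univ,
        ← ofReal_integral_eq_lintegral_ofReal hρ (ae_of_all _ hρpos)]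
      exact ENNReal.ofReal_lt_top
    have hμeq : μρ = μη := by
      refine Measure.ext_of_Iic μρ μη fun t => ?_
      rw [hμρ, hμη, withDensity_apply _ measurableSet_Iic,
        withDensity_apply _ measurableSet_Iic,
        ← ofReal_integral_eq_lintegral_ofReal hρ.integrableOn
          (ae_of_all _ fun x => hρpos x),
        ← ofReal_integral_eq_lintegral_ofReal hη.integrableOn
          (ae_of_all _ fun x => hηpos x),
        hIic t]
    have hden : (fun x => ENNReal.ofReal (ρ x)) =ᵐ[volume]
        (fun x => ENNReal.ofReal (η x)) := by
      refine (withDensity_eq_iff_of_sigmaFinite ?_ ?_).1 hμeq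
      · exact ENNReal.measurable_ofReal.comp_aemeasurable hρ.aemeasurable
      · exact ENNReal.measurable_ofReal.comp_aemeasurable hη.aemeasurable
    filter_upwards [hden] with x hx
    exact (ENNReal.ofReal_eq_ofReal_iff (hρpos x) (hηpos x)).1 hx
  · intro hae
    have h0 : (fun x => (ρ x - η x) * ∫ y, |x - y| * (ρ y - η y)) =ᵐ[volume]
        (fun _ => (0 : ℝ)) := by
      filter_upwards [hae] with x hx
      simp [hx]
    rw [integral_congr_ae h0, integral_zero, mul_zero]
end

section
/- Let μ, ν be absolutely continuous probability measures on ℝ with finite second moments and let T be the (essentially non-decreasing) optimal transport map from μ to ν. Then along the displacement interpolation g_t = ((1−t)id + tT)_#μ the functional S[μ] = −(1/2)∫∫ |x−y| dμ(x)dμ(y) is affine: S[g_t] = (1−t) S[μ] + t S[ν] for all t ∈ [0,1]. -/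
/-! If `T` is monotone off a `μ`-null set, then `x - y` and `T x - T y` have the same sign for
`μ ⊗ μ`-almost every `(x, y)`, so the triangle inequality is an equality:
`|((1-t)x + tTx) - ((1-t)y + tTy)| = (1-t)|x - y| + t|Tx - Ty|` almost everywhere. Each energy is a
double integral against `μ ⊗ μ` after pulling back through the pushforward, and integrating that
identity (the moment bounds make every term integrable) gives the affine formula. -/

open MeasureTheory Set

/-- The self-interaction energy `S[μ] = −(1/2)∫∫ |x−y| dμ(x) dμ(y)`. -/
noncomputable def selfEnergy (μ : Measure ℝ) : ℝ :=
  -(1 / 2) * ∫ x, (∫ y, |x - y| ∂μ) ∂μ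

lemma integrable_id_of_lintegral_sq_lt_top {ρ : Measure ℝ} [IsFiniteMeasure ρ]
    (h : ∫⁻ x, ENNReal.ofReal (x ^ 2) ∂ρ < ⊤) : Integrable (fun x => x) ρ := by
  have hsq : Integrable (fun x : ℝ => x ^ 2) ρ :=
    (lintegral_ofReal_ne_top_iff_integrable (by fun_prop) (ae_of_all _ sq_nonneg)).mp h.ne
  exact ((memLp_two_iff_integrable_sq aestronglyMeasurable_id).mpr hsq).integrable one_le_two

lemma integrable_abs_sub_prod {α : Type*} [MeasurableSpace α] {ρ : Measure α}
    [IsFiniteMeasure ρ] {f : α → ℝ} (hf : Integrable f ρ) :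
    Integrable (fun p : α × α => |f p.1 - f p.2|) (ρ.prod ρ) :=
  ((hf.comp_fst ρ).sub (hf.comp_snd ρ)).abs

lemma selfEnergy_map {α : Type*} [MeasurableSpace α] {ρ : Measure α} [SFinite ρ]
    {f : α → ℝ} (hf : Measurable f) :
    selfEnergy (ρ.map f) = -(1 / 2) * ∫ x, ∫ y, |f x - f y| ∂ρ ∂ρ := by
  have hinner : ∀ x, ∫ y, |x - y| ∂ρ.map f = ∫ y, |x - f y| ∂ρ := fun x =>
    integral_map hf.aemeasurable (by fun_prop)
  have hmeas : StronglyMeasurable fun x : ℝ => ∫ y, |x - f y| ∂ρ :=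
    (measurable_fst.sub (hf.comp measurable_snd)).abs.stronglyMeasurable.integral_prod_right'
  rw [selfEnergy, funext hinner, integral_map hf.aemeasurable hmeas.aestronglyMeasurable]

lemma MonotoneOn.abs_mul_sub_add_mul_sub {T : ℝ → ℝ} {s : Set ℝ} (hT : MonotoneOn T s)
    {x y : ℝ} (hx : x ∈ s) (hy : y ∈ s) {a b : ℝ} (ha : 0 ≤ a) (hb : 0 ≤ b) :
    |a * (x - y) + b * (T x - T y)| = a * |x - y| + b * |T x - T y| := by
  rw [(abs_add_eq_add_abs_iff _ _).mpr ?_, abs_mul, abs_mul, abs_of_nonneg ha, abs_of_nonneg hb]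
  rcases le_total x y with hxy | hyx
  · exact .inr ⟨mul_nonpos_of_nonneg_of_nonpos ha (sub_nonpos.2 hxy),
      mul_nonpos_of_nonneg_of_nonpos hb (sub_nonpos.2 (hT hx hy hxy))⟩
  · exact .inl ⟨mul_nonneg ha (sub_nonneg.2 hyx), mul_nonneg hb (sub_nonneg.2 (hT hy hx hyx))⟩

lemma integral_integral_abs_sub_interp {μ : Measure ℝ} [IsFiniteMeasure μ] {T : ℝ → ℝ}
    {s : Set ℝ} (hs : μ s = 0) (hT : MonotoneOn T sᶜ) (hμ : Integrable (fun x => x) μ)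
    (hTint : Integrable T μ) {t : ℝ} (ht0 : 0 ≤ t) (ht1 : t ≤ 1) :
    ∫ x, ∫ y, |((1 - t) * x + t * T x) - ((1 - t) * y + t * T y)| ∂μ ∂μ =
      (1 - t) * ∫ x, ∫ y, |x - y| ∂μ ∂μ + t * ∫ x, ∫ y, |T x - T y| ∂μ ∂μ := by
  let f : ℝ → ℝ := fun x => (1 - t) * x + t * T x
  have hf : Integrable f μ := (hμ.const_mul _).add (hTint.const_mul _)
  have hae : ∀ᵐ p ∂μ.prod μ, p.1 ∉ s ∧ p.2 ∉ s := by
    have h := measure_eq_zero_iff_ae_notMem.mp hs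
    exact (Measure.quasiMeasurePreserving_fst.ae h).and (Measure.quasiMeasurePreserving_snd.ae h)
  have hsplit : (fun p : ℝ × ℝ => |f p.1 - f p.2|) =ᵐ[μ.prod μ]
      fun p => (1 - t) * |p.1 - p.2| + t * |T p.1 - T p.2| := by
    filter_upwards [hae] with p ⟨h1, h2⟩
    rw [← hT.abs_mul_sub_add_mul_sub h1 h2 (sub_nonneg.2 ht1) ht0]
    congr 1
    ring
  rw [integral_integral (f := fun x y => |f x - f y|) (integrable_abs_sub_prod hf),
    integral_integral (f := fun x y => |x - y|) (integrable_abs_sub_prod hμ),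
    integral_integral (f := fun x y => |T x - T y|) (integrable_abs_sub_prod hTint),
    integral_congr_ae hsplit, integral_add, integral_const_mul, integral_const_mul]
  · exact (integrable_abs_sub_prod hμ).const_mul _
  · exact (integrable_abs_sub_prod hTint).const_mul _

theorem selfEnergy_affine_along_geodesic_general
    (μ ν : Measure ℝ) [IsProbabilityMeasure μ]
    (hμmom : ∫⁻ x, ENNReal.ofReal (x ^ 2) ∂μ < ⊤)
    (hνmom : ∫⁻ x, ENNReal.ofReal (x ^ 2) ∂ν < ⊤)
    (T : ℝ → ℝ) (hTmeas : Measurable T)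
    (hTpush : ν = Measure.map T μ)
    (hTmono : ∃ s : Set ℝ, μ s = 0 ∧ MonotoneOn T sᶜ) :
    ∀ t ∈ Icc (0 : ℝ) 1,
      selfEnergy (Measure.map (fun x => (1 - t) * x + t * T x) μ) =
        (1 - t) * selfEnergy μ + t * selfEnergy ν := by
  rintro t ⟨ht0, ht1⟩
  obtain ⟨s, hs, hT⟩ := hTmono
  subst hTpush
  have hTint : Integrable T μ :=
    (integrable_map_measure aestronglyMeasurable_id hTmeas.aemeasurable).mp
      (integrable_id_of_lintegral_sq_lt_top hνmom)
  rw [selfEnergy_map (f := fun x => (1 - t) * x + t * T x) (by fun_prop), selfEnergy_map hTmeas,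
    selfEnergy, integral_integral_abs_sub_interp hs hT
      (integrable_id_of_lintegral_sq_lt_top hμmom) hTint ht0 ht1]
  ring

/-- along the displacement interpolation `g_t = ((1−t)id + tT)_#μ`
between absolutely continuous measures with finite second moment, the functional
`S[μ] = −(1/2)∫∫ |x−y| dμ dμ` is affine: `S[g_t] = (1−t)S[μ] + tS[ν]`. -/
theorem selfEnergy_affine_along_geodesic
    (μ ν : Measure ℝ) [IsProbabilityMeasure μ] [IsProbabilityMeasure ν]
    (hμac : μ ≪ volume) (hνac : ν ≪ volume)
    (hμmom : ∫⁻ x, ENNReal.ofReal (x ^ 2) ∂μ < ⊤)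
    (hνmom : ∫⁻ x, ENNReal.ofReal (x ^ 2) ∂ν < ⊤)
    (T : ℝ → ℝ) (hTmeas : Measurable T)
    (hTpush : ν = Measure.map T μ)
    (hTmono : ∃ s : Set ℝ, μ s = 0 ∧ MonotoneOn T sᶜ) :
    ∀ t ∈ Icc (0 : ℝ) 1,
      selfEnergy (Measure.map (fun x => (1 - t) * x + t * T x) μ) =
        (1 - t) * selfEnergy μ + t * selfEnergy ν :=
  selfEnergy_affine_along_geodesic_general μ ν hμmom hνmom T hTmeas hTpush hTmono
end

section
/- Fix m ∈ [0,1]. Let X, Y be non-decreasing functions in L²(0,1) with X = Y on [0,m) and sup_{z∈[m,1]} X(z) < inf_{z∈[m,1]} Y(z). Then the cross-interaction energy K(X,Y) = ∫₀¹∫₀¹ |Y(ξ) − X(z)| dz dξ equals ∫₀¹ [(2z−1)𝟙_{[0,m)}(z) + (2m−1)𝟙_{[m,1]}(z)] X(z) dz + ∫₀¹ [(2z−1)𝟙_{[0,m)}(z) + 𝟙_{[m,1]}(z)] Y(z) dz. -/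
open MeasureTheory Set

/-- explicit expression for the cross-interaction energy
`K(X,Y) = ∫₀¹∫₀¹ |Y(ξ) − X(z)| dz dξ` when `X = Y` on `[0,m)` and
`sup_{[m,1]} X < inf_{[m,1]} Y`. -/
theorem crossEnergy_overlapping_formula
    (m : ℝ) (hm : m ∈ Icc (0 : ℝ) 1) (X Y : ℝ → ℝ)
    (hXmono : MonotoneOn X (Icc 0 1)) (hYmono : MonotoneOn Y (Icc 0 1))
    (hXY : ∀ z ∈ Ico (0 : ℝ) m, X z = Y z)
    (hsep : sSup (X '' Icc m 1) < sInf (Y '' Icc m 1)) :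
    ∫ z in Ioo (0 : ℝ) 1, ∫ ξ in Ioo (0 : ℝ) 1, |Y ξ - X z| =
      (∫ z in Ioo (0 : ℝ) 1,
          ((2 * z - 1) * Set.indicator (Ico (0 : ℝ) m) (fun _ => (1 : ℝ)) z +
            (2 * m - 1) * Set.indicator (Icc m 1) (fun _ => (1 : ℝ)) z) * X z) +
        ∫ z in Ioo (0 : ℝ) 1,
          ((2 * z - 1) * Set.indicator (Ico (0 : ℝ) m) (fun _ => (1 : ℝ)) z +
            Set.indicator (Icc m 1) (fun _ => (1 : ℝ)) z) * Y z := by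
  obtain ⟨hm0, hm1⟩ := hm
  haveI hfin : IsFiniteMeasure (volume.restrict (Ioo (0:ℝ) 1)) :=
    ⟨by rw [Measure.restrict_apply_univ]; simp [Real.volume_Ioo]⟩
  have hIoo : MeasurableSet (Ioo (0:ℝ) 1) := measurableSet_Ioo
  have hXint : IntegrableOn X (Ioo 0 1) :=
    (hXmono.integrableOn_isCompact isCompact_Icc).mono_set Ioo_subset_Icc_self
  have hYint : IntegrableOn Y (Ioo 0 1) :=
    (hYmono.integrableOn_isCompact isCompact_Icc).mono_set Ioo_subset_Icc_self
  -- separation across m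
  have hsep' : ∀ z ∈ Ioo (0:ℝ) 1, ∀ ξ ∈ Ioo (0:ℝ) 1, m ≤ ξ → X z ≤ Y ξ := by
    intro z hz ξ hξ hmξ
    have hbddA : BddAbove (X '' Icc m 1) := by
      refine ⟨X 1, ?_⟩
      rintro _ ⟨t, ht, rfl⟩
      exact hXmono ⟨hm0.trans ht.1, ht.2⟩ ⟨zero_le_one, le_rfl⟩ ht.2
    have hbddB : BddBelow (Y '' Icc m 1) := by
      refine ⟨Y 0, ?_⟩
      rintro _ ⟨t, ht, rfl⟩
      exact hYmono ⟨le_rfl, zero_le_one⟩ ⟨hm0.trans ht.1, ht.2⟩ (hm0.trans ht.1)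
    have h1 : X z ≤ X (max m z) := by
      refine hXmono ⟨hz.1.le, hz.2.le⟩ ⟨hm0.trans (le_max_left _ _), max_le hm1 hz.2.le⟩
        (le_max_right _ _)
    have h2 : X (max m z) ≤ sSup (X '' Icc m 1) :=
      le_csSup hbddA ⟨max m z, ⟨le_max_left _ _, max_le hm1 hz.2.le⟩, rfl⟩
    have h3 : sInf (Y '' Icc m 1) ≤ Y ξ := csInf_le hbddB ⟨ξ, ⟨hmξ, hξ.2.le⟩, rfl⟩
    linarith
  -- pointwise sign identity
  have key : ∀ z ∈ Ioo (0:ℝ) 1, ∀ ξ ∈ Ioo (0:ℝ) 1,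
      |Y ξ - X z| = (Y ξ - X z) + 2 * (Iio (min m z)).indicator (fun t => X z - Y t) ξ := by
    intro z hz ξ hξ
    by_cases h : ξ < min m z
    · have hξm : ξ < m := h.trans_le (min_le_left _ _)
      have hξz : ξ < z := h.trans_le (min_le_right _ _)
      have h1 : X ξ = Y ξ := hXY ξ ⟨hξ.1.le, hξm⟩
      have h2 : X ξ ≤ X z := hXmono ⟨hξ.1.le, hξ.2.le⟩ ⟨hz.1.le, hz.2.le⟩ hξz.le
      rw [indicator_of_mem (mem_Iio.mpr h), abs_of_nonpos (by linarith)]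
      ring
    · rw [indicator_of_notMem (fun hh => h (mem_Iio.mp hh))]
      have hle : X z ≤ Y ξ := by
        rcases le_or_gt m ξ with hc | hc
        · exact hsep' z hz ξ hξ hc
        · rcases min_le_iff.mp (not_lt.mp h) with h' | h'
          · linarith
          · rw [← hXY ξ ⟨hξ.1.le, hc⟩]
            exact hXmono ⟨hz.1.le, hz.2.le⟩ ⟨hξ.1.le, hξ.2.le⟩ h'
      rw [abs_of_nonneg (by linarith)]
      ring
  -- indicator integrals over [0,1]
  have e2 : ∀ c : ℝ, c ≤ 1 → ∀ f : ℝ → ℝ,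
      ∫ ξ in Ioo (0:ℝ) 1, (Iio c).indicator f ξ = ∫ ξ in Ioo 0 c, f ξ := by
    intro c hc f
    rw [setIntegral_indicator measurableSet_Iio, Ioo_inter_Iio, min_eq_right hc]
  -- the kernel for the Fubini swap
  set H : ℝ × ℝ → ℝ := fun p => (Iio (min m p.1)).indicator Y p.2 with hHdef
  have hHmeas : AEStronglyMeasurable H
      ((volume.restrict (Ioo (0:ℝ) 1)).prod (volume.restrict (Ioo (0:ℝ) 1))) := by
    have h1 : AEStronglyMeasurable (fun p : ℝ × ℝ => Y p.2)
        ((volume.restrict (Ioo (0:ℝ) 1)).prod (volume.restrict (Ioo (0:ℝ) 1))) := hYint.1.comp_snd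
    have hS : MeasurableSet {p : ℝ × ℝ | p.2 < min m p.1} :=
      measurableSet_lt measurable_snd (measurable_const.min measurable_fst)
    have hrw : H = {p : ℝ × ℝ | p.2 < min m p.1}.indicator (fun p => Y p.2) := by
      funext p
      by_cases hp : p.2 < min m p.1
      · simp only [hHdef]
        rw [indicator_of_mem (mem_Iio.mpr hp),
          indicator_of_mem (show p ∈ {p : ℝ × ℝ | p.2 < min m p.1} from hp)]
      · simp only [hHdef]
        rw [indicator_of_notMem (fun hh => hp (mem_Iio.mp hh)),
          indicator_of_notMem (show p ∉ {p : ℝ × ℝ | p.2 < min m p.1} from hp)]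
    rw [hrw]
    exact h1.indicator hS
  have hHint : Integrable H
      ((volume.restrict (Ioo (0:ℝ) 1)).prod (volume.restrict (Ioo (0:ℝ) 1))) := by
    refine Integrable.mono' ((integrable_const (1:ℝ)).mul_prod hYint.norm) hHmeas ?_
    refine Filter.Eventually.of_forall fun p => ?_
    simpa using norm_indicator_le_norm_self Y p.2
  have hG : Integrable (fun z => ∫ ξ in Ioo (0:ℝ) 1, H (z, ξ)) (volume.restrict (Ioo (0:ℝ) 1)) :=
    hHint.integral_prod_left
  -- integrability of auxiliary integrands
  have hTxint : IntegrableOn (fun z => min m z * X z) (Ioo (0:ℝ) 1) := by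
    refine hXint.norm.mono'
      (((continuous_const.min continuous_id).aestronglyMeasurable).mul hXint.1) ?_
    rw [ae_restrict_iff' hIoo]
    refine Filter.Eventually.of_forall fun z hz => ?_
    have h0 : 0 ≤ min m z := le_min hm0 hz.1.le
    have h1 : min m z ≤ 1 := (min_le_right _ _).trans hz.2.le
    rw [norm_mul]
    calc ‖min m z‖ * ‖X z‖ ≤ 1 * ‖X z‖ := by
          refine mul_le_mul_of_nonneg_right ?_ (norm_nonneg _)
          rw [Real.norm_eq_abs, abs_of_nonneg h0]; exact h1
      _ = ‖X z‖ := one_mul _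
  have h1Yint : IntegrableOn (fun t => (1 - t) * Y t) (Ioo (0:ℝ) 1) := by
    refine hYint.norm.mono'
      (((continuous_const.sub continuous_id).aestronglyMeasurable).mul hYint.1) ?_
    rw [ae_restrict_iff' hIoo]
    refine Filter.Eventually.of_forall fun z hz => ?_
    rw [norm_mul]
    calc ‖1 - z‖ * ‖Y z‖ ≤ 1 * ‖Y z‖ := by
          refine mul_le_mul_of_nonneg_right ?_ (norm_nonneg _)
          rw [Real.norm_eq_abs, abs_of_nonneg (by linarith [hz.2] : (0:ℝ) ≤ 1 - z)]
          linarith [hz.1]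
      _ = ‖Y z‖ := one_mul _
  have hT2ind : IntegrableOn ((Iio m).indicator (fun t => (1 - t) * Y t)) (Ioo (0:ℝ) 1) :=
    h1Yint.indicator measurableSet_Iio
  -- inner integral computation
  have inner : ∀ z ∈ Ioo (0:ℝ) 1,
      ∫ ξ in Ioo (0:ℝ) 1, |Y ξ - X z|
        = ((∫ ξ in Ioo (0:ℝ) 1, Y ξ) - X z + 2 * (min m z * X z))
          - 2 * ∫ ξ in Ioo (0:ℝ) 1, H (z, ξ) := by
    intro z hz
    have h0 : 0 ≤ min m z := le_min hm0 hz.1.le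
    have h1 : min m z ≤ 1 := (min_le_right _ _).trans hz.2.le
    have i1 : IntegrableOn (fun ξ => Y ξ - X z) (Ioo (0:ℝ) 1) := hYint.sub (integrable_const _)
    have i2 : IntegrableOn ((Iio (min m z)).indicator (fun t => X z - Y t)) (Ioo (0:ℝ) 1) :=
      ((integrable_const (X z)).sub hYint).indicator measurableSet_Iio
    rw [setIntegral_congr_fun hIoo (fun ξ hξ => key z hz ξ hξ),
      integral_add i1 (i2.const_mul 2), integral_sub hYint (integrable_const _),
      integral_const_mul 2 _, e2 _ h1]
    have e3 : (∫ ξ in Ioo (0:ℝ) 1, H (z, ξ)) = ∫ ξ in Ioo 0 (min m z), Y ξ := e2 _ h1 Y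
    rw [e3, integral_sub (integrable_const _) (hYint.mono_set (Ioo_subset_Ioo le_rfl h1))]
    simp only [integral_const, measureReal_def, Measure.restrict_apply_univ, Real.volume_Ioo, smul_eq_mul,
      sub_zero, ENNReal.toReal_ofReal h0, ENNReal.toReal_ofReal (zero_le_one' ℝ)]
    ring
  -- Fubini swap
  have hswap : (∫ z in Ioo (0:ℝ) 1, ∫ ξ in Ioo (0:ℝ) 1, H (z, ξ))
      = ∫ ξ in Ioo (0:ℝ) 1, ∫ z in Ioo (0:ℝ) 1, H (z, ξ) :=
    integral_integral_swap hHint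
  have innerswap : ∀ ξ ∈ Ioo (0:ℝ) 1,
      (∫ z in Ioo (0:ℝ) 1, H (z, ξ)) = (Iio m).indicator (fun t => (1 - t) * Y t) ξ := by
    intro ξ hξ
    by_cases hc : ξ < m
    · have hz : ∀ z, H (z, ξ) = (Ioi ξ).indicator (fun _ => Y ξ) z := by
        intro z
        by_cases hzc : ξ < z
        · rw [indicator_of_mem (show z ∈ Ioi ξ from hzc)]
          simp only [hHdef]
          rw [indicator_of_mem (mem_Iio.mpr (lt_min hc hzc))]
        · rw [indicator_of_notMem (show z ∉ Ioi ξ from hzc)]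
          simp only [hHdef]
          rw [indicator_of_notMem
            (fun hh => hzc ((mem_Iio.mp hh).trans_le (min_le_right _ _)))]
      rw [integral_congr_ae (Filter.Eventually.of_forall hz),
        setIntegral_indicator measurableSet_Ioi, Ioo_inter_Ioi, max_eq_right hξ.1.le,
        setIntegral_const, indicator_of_mem (mem_Iio.mpr hc)]
      rw [Real.volume_real_Ioo_of_le (by linarith [hξ.2] : ξ ≤ 1),
        smul_eq_mul]
    · have hz : ∀ z, H (z, ξ) = 0 := by
        intro z
        simp only [hHdef]
        rw [indicator_of_notMem (fun hh => hc ((mem_Iio.mp hh).trans_le (min_le_left _ _)))]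
      rw [integral_congr_ae (Filter.Eventually.of_forall hz),
        indicator_of_notMem (fun hh => hc (mem_Iio.mp hh))]
      simp
  have hT2 : (∫ z in Ioo (0:ℝ) 1, ∫ ξ in Ioo (0:ℝ) 1, H (z, ξ))
      = ∫ t in Ioo (0:ℝ) 1, (Iio m).indicator (fun t => (1 - t) * Y t) t := by
    rw [hswap]
    exact setIntegral_congr_fun hIoo innerswap
  -- total left-hand side
  have hL : (∫ z in Ioo (0:ℝ) 1, ∫ ξ in Ioo (0:ℝ) 1, |Y ξ - X z|)
      = (∫ ξ in Ioo (0:ℝ) 1, Y ξ) - (∫ z in Ioo (0:ℝ) 1, X z)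
        + 2 * (∫ z in Ioo (0:ℝ) 1, min m z * X z)
        - 2 * (∫ t in Ioo (0:ℝ) 1, (Iio m).indicator (fun t => (1 - t) * Y t) t) := by
    have ia1 : IntegrableOn (fun z => (∫ ξ in Ioo (0:ℝ) 1, Y ξ) - X z) (Ioo (0:ℝ) 1) :=
      (integrable_const _).sub hXint
    have ia : IntegrableOn
        (fun z => (∫ ξ in Ioo (0:ℝ) 1, Y ξ) - X z + 2 * (min m z * X z)) (Ioo (0:ℝ) 1) :=
      ia1.add (hTxint.const_mul 2)
    have ib : IntegrableOn (fun z => 2 * ∫ ξ in Ioo (0:ℝ) 1, H (z, ξ)) (Ioo (0:ℝ) 1) :=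
      hG.const_mul 2
    rw [setIntegral_congr_fun hIoo (fun z hz => inner z hz),
      integral_sub ia ib, integral_add ia1 (hTxint.const_mul 2),
      integral_sub (integrable_const _) hXint, integral_const_mul 2 _, integral_const_mul 2 _,
      hT2]
    simp only [integral_const, measureReal_def, Measure.restrict_apply_univ, Real.volume_Ioo, smul_eq_mul,
      sub_zero, ENNReal.toReal_ofReal (zero_le_one' ℝ)]
    ring
  -- right-hand side, first term
  have hR1 : (∫ z in Ioo (0:ℝ) 1,
        ((2 * z - 1) * Set.indicator (Ico (0:ℝ) m) (fun _ => (1:ℝ)) z +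
          (2 * m - 1) * Set.indicator (Icc m 1) (fun _ => (1:ℝ)) z) * X z)
      = 2 * (∫ z in Ioo (0:ℝ) 1, min m z * X z) - ∫ z in Ioo (0:ℝ) 1, X z := by
    have he : EqOn (fun z => ((2 * z - 1) * Set.indicator (Ico (0:ℝ) m) (fun _ => (1:ℝ)) z +
          (2 * m - 1) * Set.indicator (Icc m 1) (fun _ => (1:ℝ)) z) * X z)
        (fun z => 2 * (min m z * X z) - X z) (Ioo 0 1) := by
      intro z hz
      dsimp only
      by_cases hc : z < m
      · rw [indicator_of_mem (show z ∈ Ico (0:ℝ) m from ⟨hz.1.le, hc⟩),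
          indicator_of_notMem (show z ∉ Icc m 1 from fun hh => absurd hh.1 (not_le.mpr hc)),
          min_eq_right hc.le]
        ring
      · rw [indicator_of_notMem (show z ∉ Ico (0:ℝ) m from fun hh => hc hh.2),
          indicator_of_mem (show z ∈ Icc m 1 from ⟨not_lt.mp hc, hz.2.le⟩),
          min_eq_left (not_lt.mp hc)]
        ring
    rw [setIntegral_congr_fun hIoo he, integral_sub (hTxint.const_mul 2) hXint,
      integral_const_mul 2 _]
  -- right-hand side, second term
  have hR2 : (∫ z in Ioo (0:ℝ) 1,
        ((2 * z - 1) * Set.indicator (Ico (0:ℝ) m) (fun _ => (1:ℝ)) z +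
          Set.indicator (Icc m 1) (fun _ => (1:ℝ)) z) * Y z)
      = (∫ z in Ioo (0:ℝ) 1, Y z)
        - 2 * (∫ t in Ioo (0:ℝ) 1, (Iio m).indicator (fun t => (1 - t) * Y t) t) := by
    have he : EqOn (fun z => ((2 * z - 1) * Set.indicator (Ico (0:ℝ) m) (fun _ => (1:ℝ)) z +
          Set.indicator (Icc m 1) (fun _ => (1:ℝ)) z) * Y z)
        (fun z => Y z - 2 * (Iio m).indicator (fun t => (1 - t) * Y t) z) (Ioo 0 1) := by
      intro z hz
      dsimp only
      by_cases hc : z < m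
      · rw [indicator_of_mem (show z ∈ Ico (0:ℝ) m from ⟨hz.1.le, hc⟩),
          indicator_of_notMem (show z ∉ Icc m 1 from fun hh => absurd hh.1 (not_le.mpr hc)),
          indicator_of_mem (mem_Iio.mpr hc)]
        ring
      · rw [indicator_of_notMem (show z ∉ Ico (0:ℝ) m from fun hh => hc hh.2),
          indicator_of_mem (show z ∈ Icc m 1 from ⟨not_lt.mp hc, hz.2.le⟩),
          indicator_of_notMem (fun hh => hc (mem_Iio.mp hh))]
        ring
    rw [setIntegral_congr_fun hIoo he, integral_sub hYint (hT2ind.const_mul 2),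
      integral_const_mul 2 _]
  rw [hR1, hR2, hL]
  ring
end

section
/- For t ∈ (0, 1/2), the pair X(t,z) = −1 + 2zt, Y(t,z) = 1 + t(2z−2), z ∈ [0,1], satisfies pointwise the pseudo-inverse system: ∂_t X(t,z) = ∫₀¹ sign(X(t,z)−X(t,ξ))dξ − ∫₀¹ sign(X(t,z)−Y(t,ξ))dξ and ∂_t Y(t,z) = ∫₀¹ sign(Y(t,z)−Y(t,ξ))dξ − ∫₀¹ sign(Y(t,z)−X(t,ξ))dξ, with the convention sign(0)=0. -/
open MeasureTheory Set

/-!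
Both self-interaction integrands equal `sign (2t (z - ξ)) = sign (z - ξ)`, whose integral over
`(0, 1)` is `2z - 1`. For `t < 1/2` the ranges `X(t, ·) ⊆ [-1, 0)` and `Y(t, ·) ⊆ (0, 1]` stay
apart, so the cross integrands are constantly `-1` and `+1`. The right-hand sides are therefore
`2z` and `2z - 2`, the time derivatives of `X` and `Y`.
-/

theorem Real.sign_mul_of_pos {c : ℝ} (hc : 0 < c) (x : ℝ) :
    Real.sign (c * x) = Real.sign x := by
  rcases lt_trichotomy x 0 with hx | rfl | hx
  · rw [Real.sign_of_neg hx, Real.sign_of_neg (mul_neg_of_pos_of_neg hc hx)]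
  · rw [mul_zero]
  · rw [Real.sign_of_pos hx, Real.sign_of_pos (mul_pos hc hx)]

section SignIntegrals

variable {α : Type*} [MeasurableSpace α] {μ : Measure α} {s : Set α} {f : α → ℝ}

theorem setIntegral_sign_of_pos (hs : MeasurableSet s) (hf : ∀ x ∈ s, 0 < f x) :
    ∫ x in s, Real.sign (f x) ∂μ = μ.real s := by
  rw [setIntegral_congr_fun hs fun x hx => Real.sign_of_pos (hf x hx), setIntegral_const,
    smul_eq_mul, mul_one]

theorem setIntegral_sign_of_neg (hs : MeasurableSet s) (hf : ∀ x ∈ s, f x < 0) :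
    ∫ x in s, Real.sign (f x) ∂μ = -μ.real s := by
  rw [setIntegral_congr_fun hs fun x hx => Real.sign_of_neg (hf x hx), setIntegral_const,
    smul_eq_mul, mul_neg_one]

end SignIntegrals

theorem integral_sign_sub (μ : Measure ℝ) [IsFiniteMeasure μ] (z : ℝ) :
    ∫ ξ, Real.sign (z - ξ) ∂μ = μ.real (Iio z) - μ.real (Ioi z) := by
  have hsign : (fun ξ => Real.sign (z - ξ)) = (Iio z).indicator 1 - (Ioi z).indicator 1 := by
    ext ξ
    rcases lt_trichotomy ξ z with h | rfl | h
    · simp [Real.sign_of_pos (sub_pos.2 h), h, h.not_gt]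
    · simp
    · simp [Real.sign_of_neg (sub_neg.2 h), h, h.not_gt]
  rw [hsign, integral_sub' ((integrable_const 1).indicator measurableSet_Iio)
    ((integrable_const 1).indicator measurableSet_Ioi), integral_indicator_one measurableSet_Iio,
    integral_indicator_one measurableSet_Ioi]

theorem setIntegral_sign_sub_Ioo {a b z : ℝ} (hz : z ∈ Icc a b) :
    ∫ ξ in Ioo a b, Real.sign (z - ξ) = (z - a) - (b - z) := by
  have : IsFiniteMeasure (volume.restrict (Ioo a b)) :=
    isFiniteMeasure_restrict.2 measure_Ioo_lt_top.ne
  have hlow : Iio z ∩ Ioo a b = Ioo a z := by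
    rw [Iio_inter_Ioo, min_eq_left hz.2]
  have hhigh : Ioi z ∩ Ioo a b = Ioo z b := by
    ext ξ
    simp only [mem_inter_iff, mem_Ioi, mem_Ioo]
    exact ⟨fun h => ⟨h.1, h.2.2⟩, fun h => ⟨h.1, hz.1.trans_lt h.1, h.2⟩⟩
  rw [integral_sign_sub, measureReal_restrict_apply measurableSet_Iio,
    measureReal_restrict_apply measurableSet_Ioi, hlow, hhigh,
    Real.volume_real_Ioo_of_le hz.1, Real.volume_real_Ioo_of_le hz.2]

/-- for `t ∈ (0,1/2)`, the pair `X(t,z) = −1 + 2zt`,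
`Y(t,z) = 1 + t(2z−2)` solves the pseudo-inverse system pointwise, with the
convention `sign 0 = 0` (as in `Real.sign`). -/
theorem two_deltas_gradient_flow_solution :
    ∀ t ∈ Ioo (0 : ℝ) (1 / 2), ∀ z ∈ Icc (0 : ℝ) 1,
      HasDerivAt (fun τ : ℝ => -1 + 2 * z * τ)
        ((∫ ξ in Ioo (0 : ℝ) 1, Real.sign ((-1 + 2 * z * t) - (-1 + 2 * ξ * t))) -
          ∫ ξ in Ioo (0 : ℝ) 1, Real.sign ((-1 + 2 * z * t) - (1 + t * (2 * ξ - 2)))) t ∧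
      HasDerivAt (fun τ : ℝ => 1 + τ * (2 * z - 2))
        ((∫ ξ in Ioo (0 : ℝ) 1, Real.sign ((1 + t * (2 * z - 2)) - (1 + t * (2 * ξ - 2)))) -
          ∫ ξ in Ioo (0 : ℝ) 1, Real.sign ((1 + t * (2 * z - 2)) - (-1 + 2 * ξ * t))) t := by
  rintro t ⟨ht0, ht2⟩ z hz
  have hself : ∫ ξ in Ioo (0 : ℝ) 1, Real.sign (2 * t * (z - ξ)) = 2 * z - 1 := by
    simp_rw [Real.sign_mul_of_pos (by positivity : (0 : ℝ) < 2 * t)]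
    rw [setIntegral_sign_sub_Ioo hz]
    ring
  have hunit : volume.real (Ioo (0 : ℝ) 1) = 1 := by
    rw [Real.volume_real_Ioo_of_le zero_le_one, sub_zero]
  have hXY : ∀ ξ ∈ Ioo (0 : ℝ) 1, (-1 + 2 * z * t) - (1 + t * (2 * ξ - 2)) < 0 := by
    intro ξ hξ
    nlinarith [hz.2, hξ.1]
  have hYX : ∀ ξ ∈ Ioo (0 : ℝ) 1, 0 < (1 + t * (2 * z - 2)) - (-1 + 2 * ξ * t) := by
    intro ξ hξ
    nlinarith [hz.1, hξ.2]
  constructor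
  · refine (((hasDerivAt_id t).const_mul (2 * z)).const_add (-1)).congr_deriv ?_
    simp_rw [show ∀ ξ : ℝ, (-1 + 2 * z * t) - (-1 + 2 * ξ * t) = 2 * t * (z - ξ) by
      intro ξ; ring]
    rw [hself, setIntegral_sign_of_neg measurableSet_Ioo hXY, hunit]
    ring
  · refine ((hasDerivAt_mul_const (2 * z - 2)).const_add 1).congr_deriv ?_
    simp_rw [show ∀ ξ : ℝ, (1 + t * (2 * z - 2)) - (1 + t * (2 * ξ - 2)) = 2 * t * (z - ξ) by
      intro ξ; ring]
    rw [hself, setIntegral_sign_of_pos measurableSet_Ioo hYX, hunit]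
    ring
end

section
/- Let ρ be a probability density on ℝᵈ with finite second moment m₂(ρ). Then for any β ∈ (d/(d+2), 1) there is a constant C depending only on d and β such that the entropy H(ρ) = ∫ ρ log ρ dx satisfies H(ρ) ≥ −C(m₂(ρ) + 1)^β. -/
/-!
Young's inequality `s log s ≥ c s - exp c` with the Gaussian weight `c = -a ‖x‖²`, integrated,
gives `∫ ρ log ρ ≥ -a m₂(ρ) - (π / a)^(d/2)` for every `a > 0`.
The choice `a = (m₂(ρ) + 1)^(β - 1)` balances the two terms, and `β ≥ d / (d + 2)` is exactly
what makes `(π / a)^(d/2) ≤ π^(d/2) (m₂(ρ) + 1)^β`.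
-/

open MeasureTheory Set Real

lemma mul_sub_exp_le_mul_log {s : ℝ} (hs : 0 ≤ s) (c : ℝ) : c * s - exp c ≤ s * log s := by
  rcases hs.eq_or_lt with rfl | hs
  · simp [(exp_pos c).le]
  · have h : c - log s + 1 ≤ exp c / s := by
      simpa [exp_sub, exp_log hs] using add_one_le_exp (c - log s)
    have h' : s * (c - log s + 1) ≤ exp c := by
      rwa [le_div_iff₀ hs, mul_comm] at h
    nlinarith

section Gaussian

variable {V : Type*} [NormedAddCommGroup V] [InnerProductSpace ℝ V] [FiniteDimensional ℝ V]
  [MeasurableSpace V] [BorelSpace V]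

theorem neg_mul_integral_sq_norm_mul_sub_le_integral_mul_log {ρ : V → ℝ} (hρ : ∀ x, 0 ≤ ρ x)
    (hm : Integrable fun x => ‖x‖ ^ 2 * ρ x) {a : ℝ} (ha : 0 < a) :
    -a * (∫ x, ‖x‖ ^ 2 * ρ x) - (π / a) ^ (Module.finrank ℝ V / 2 : ℝ)
      ≤ ∫ x, ρ x * log (ρ x) := by
  have hmass := GaussianFourier.integral_rexp_neg_mul_sq_norm (V := V) ha
  have hgauss : Integrable fun x : V => exp (-a * ‖x‖ ^ 2) :=
    Integrable.of_integral_ne_zero (by rw [hmass]; positivity)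
  by_cases hI : Integrable fun x => ρ x * log (ρ x)
  · calc -a * (∫ x, ‖x‖ ^ 2 * ρ x) - (π / a) ^ (Module.finrank ℝ V / 2 : ℝ)
          = ∫ x, (-a * (‖x‖ ^ 2 * ρ x) - exp (-a * ‖x‖ ^ 2)) := by
            rw [integral_sub (hm.const_mul _) hgauss, integral_const_mul, hmass]
        _ ≤ ∫ x, ρ x * log (ρ x) :=
            integral_mono ((hm.const_mul _).sub hgauss) hI fun x => by
              rw [← mul_assoc]; exact mul_sub_exp_le_mul_log (hρ x) _
  · have hmoment : 0 ≤ ∫ x, ‖x‖ ^ 2 * ρ x := integral_nonneg fun x => by have := hρ x; positivity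
    have hpow : 0 < (π / a) ^ (Module.finrank ℝ V / 2 : ℝ) := by positivity
    rw [integral_undef hI]
    nlinarith

end Gaussian

lemma rpow_sub_one_mul_add_div_rpow_le {M β k c : ℝ} (hM : 0 ≤ M) (hc : 0 ≤ c)
    (hk : (1 - β) * k ≤ β) :
    (M + 1) ^ (β - 1) * M + (c / (M + 1) ^ (β - 1)) ^ k ≤ (1 + c ^ k) * (M + 1) ^ β := by
  have hM1 : 1 ≤ M + 1 := by linarith
  have hmoment : (M + 1) ^ (β - 1) * M ≤ (M + 1) ^ β :=
    calc (M + 1) ^ (β - 1) * M ≤ (M + 1) ^ (β - 1) * (M + 1) := by gcongr; linarith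
      _ = (M + 1) ^ β := by rw [← rpow_add_one (by positivity)]; ring_nf
  have hmass : (c / (M + 1) ^ (β - 1)) ^ k ≤ c ^ k * (M + 1) ^ β :=
    calc (c / (M + 1) ^ (β - 1)) ^ k = c ^ k * (M + 1) ^ ((1 - β) * k) := by
          rw [div_eq_mul_inv, ← rpow_neg (by positivity), mul_rpow hc (by positivity),
            ← rpow_mul (by positivity), neg_sub]
      _ ≤ c ^ k * (M + 1) ^ β := by gcongr
  linarith

theorem entropy_lower_bound_general
    (d : ℕ) (β : ℝ) (hβ : β ∈ Ioo ((d : ℝ) / (d + 2)) 1) :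
    ∃ C : ℝ, 0 < C ∧
      ∀ ρ : EuclideanSpace ℝ (Fin d) → ℝ, Measurable ρ → (∀ x, 0 ≤ ρ x) →
        (Integrable ρ) → (∫ x, ρ x = 1) →
        (Integrable fun x => ‖x‖ ^ 2 * ρ x) →
        -C * ((∫ x, ‖x‖ ^ 2 * ρ x) + 1) ^ β ≤ ∫ x, ρ x * Real.log (ρ x) := by
  have hk : (1 - β) * ((d : ℝ) / 2) ≤ β := by
    have := hβ.1
    rw [div_lt_iff₀ (by positivity)] at this
    nlinarith
  refine ⟨1 + π ^ ((d : ℝ) / 2), by positivity, fun ρ _ hρ _ _ hm => ?_⟩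
  set M := ∫ x, ‖x‖ ^ 2 * ρ x
  have hM : 0 ≤ M := integral_nonneg fun x => by have := hρ x; positivity
  have hentropy := neg_mul_integral_sq_norm_mul_sub_le_integral_mul_log hρ hm
    (a := (M + 1) ^ (β - 1)) (by positivity)
  rw [finrank_euclideanSpace_fin] at hentropy
  have hbalance := rpow_sub_one_mul_add_div_rpow_le hM pi_pos.le hk
  linarith

/-- Carleman-type entropy lower bound: for any `β ∈ (d/(d+2), 1)` there
is a constant `C > 0`, depending only on `d` and `β`, such that every probability
density `ρ` on `ℝᵈ` with finite second moment satisfies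
`∫ ρ log ρ ≥ −C (m₂(ρ) + 1)^β`. -/
theorem entropy_lower_bound (d : ℕ) (hd : 0 < d)
    (β : ℝ) (hβ : β ∈ Ioo ((d : ℝ) / (d + 2)) 1) :
    ∃ C : ℝ, 0 < C ∧
      ∀ ρ : EuclideanSpace ℝ (Fin d) → ℝ, Measurable ρ → (∀ x, 0 ≤ ρ x) →
        (Integrable ρ) → (∫ x, ρ x = 1) →
        (Integrable fun x => ‖x‖ ^ 2 * ρ x) →
        -C * ((∫ x, ‖x‖ ^ 2 * ρ x) + 1) ^ β ≤ ∫ x, ρ x * Real.log (ρ x) :=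
  entropy_lower_bound_general d β hβ
end
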